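/- arXiv:2403.04842 — 14 statements merged into one kernel-verified Lean document; each statement's English description precedes it below -/
import Mathlib

section
/- Let Δ ∈ (0,1] and let γ = (1, Δ, Δ, Δ²)/(1+Δ)² be the two-qubit Gibbs vector. For every p ∈ Δ₄: if there exists q ∈ T₊(p) with f(q) < 0, then f(p*) < 0, where p* := p^{(2,1,3,4)} is the extreme point of the future thermal cone corresponding to the β-ordering (2,1,3,4). (In other words, a two-qubit energy-incoherent state is thermally entanglable if and only if the single extreme point p* is subspace entanglable.) -/
/-!
For a state `q` of total mass one with `q 2 ≤ q 1`, the identity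
`q₁ - q₂ - 2√(q₀q₃) = 2q₁ - 1 + (√q₀ - √q₃)²` shows that `fwit q < 0` iff
`1 < 2q₁ + (√q₀ - √q₃)²`. For the ordering `(1, 0, 2, 3)` the extreme point is
`p* = (L(γ₀+γ₁) - L(γ₁), L(γ₁), L(γ₀+γ₁+γ₂) - L(γ₀+γ₁), 1 - L(γ₀+γ₁+γ₂))`. Bounding the sums of
a state `q` of the future cone over `{1}`, `{0,1}`, `{1,3}`, `{0,1,2}`, `{1,2,3}` by `L_p` (using
`γ₃ ≤ γ₀` for the third and fifth) gives `q₁ ≤ p*₁`, `q₀ + q₁ ≤ p*₀ + p*₁`, `q₃ + q₁ ≤ p*₀ + p*₁`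
and `p*₃ ≤ min q₀ q₃`, and these can only increase `2x₁ + (√x₀ - √x₃)²` from `q` to `p*`. Since
`γ₁ = γ₂`, swapping levels 1 and 2 preserves the cone, so we may assume `q 2 ≤ q 1`.
-/

open Finset

/-- The probability simplex Δ₄ ⊂ ℝ⁴. -/
def inSimplex (p : Fin 4 → ℝ) : Prop := (∀ i, 0 ≤ p i) ∧ ∑ i, p i = 1

/-- The entanglement witness f(q) = 4 q₁ q₄ − (q₂ − q₃)². -/
noncomputable def fwit (q : Fin 4 → ℝ) : ℝ := 4 * q 0 * q 3 - (q 1 - q 2) ^ 2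

/-- The two-qubit Gibbs vector γ = (1, Δ, Δ, Δ²)/(1+Δ)². -/
noncomputable def gibbs (Δ : ℝ) : Fin 4 → ℝ :=
  ![1 / (1 + Δ) ^ 2, Δ / (1 + Δ) ^ 2, Δ / (1 + Δ) ^ 2, Δ ^ 2 / (1 + Δ) ^ 2]

/-- The thermomajorization curve L_p(x) = min_{c ≥ 0} (c x + Σᵢ max(pᵢ − c γᵢ, 0)). -/
noncomputable def Lcurve (γ p : Fin 4 → ℝ) (x : ℝ) : ℝ :=
  ⨅ c : { c : ℝ // 0 ≤ c }, (c.1 * x + ∑ i, max (p i - c.1 * γ i) 0)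

/-- The future thermal cone T₊(p): states whose thermomajorization curve lies below that of p. -/
def futureCone (γ p : Fin 4 → ℝ) : Set (Fin 4 → ℝ) :=
  { q | inSimplex q ∧ ∀ x ∈ Set.Icc (0 : ℝ) 1, Lcurve γ q x ≤ Lcurve γ p x }

/-- x_k = γ_{π(1)} + ⋯ + γ_{π(k)}  (0-based permutation, k = 0,…,4). -/
noncomputable def partialX (γ : Fin 4 → ℝ) (π : Equiv.Perm (Fin 4)) (k : ℕ) : ℝ :=
  ∑ j : Fin 4, if (j : ℕ) < k then γ (π j) else 0

/-- The extreme point p^π of the future thermal cone: p^π_{π(k)} = L_p(x_k) − L_p(x_{k−1}). -/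
noncomputable def extremePt (γ p : Fin 4 → ℝ) (π : Equiv.Perm (Fin 4)) : Fin 4 → ℝ :=
  fun i =>
    Lcurve γ p (partialX γ π ((π.symm i : ℕ) + 1)) - Lcurve γ p (partialX γ π (π.symm i))

section Lcurve

variable (γ p : Fin 4 → ℝ)

theorem Lcurve_le_mul_add_sum {x : ℝ} (hx : 0 ≤ x) {c : ℝ} (hc : 0 ≤ c) :
    Lcurve γ p x ≤ c * x + ∑ i, max (p i - c * γ i) 0 := by
  refine ciInf_le ⟨0, ?_⟩ (⟨c, hc⟩ : {c : ℝ // 0 ≤ c})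
  rintro _ ⟨c', rfl⟩
  have : 0 ≤ ∑ i, max (p i - c'.1 * γ i) 0 := sum_nonneg fun i _ => le_max_right _ _
  have : 0 ≤ c'.1 * x := mul_nonneg c'.2 hx
  linarith

theorem le_Lcurve {x m : ℝ}
    (h : ∀ c : ℝ, 0 ≤ c → m ≤ c * x + ∑ i, max (p i - c * γ i) 0) : m ≤ Lcurve γ p x :=
  le_ciInf fun c => h c.1 c.2

theorem monotoneOn_Lcurve : MonotoneOn (Lcurve γ p) (Set.Ici 0) := by
  intro x hx y _ hxy
  refine le_Lcurve γ p fun c hc => (Lcurve_le_mul_add_sum γ p hx hc).trans ?_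
  gcongr

theorem sum_le_Lcurve {S : Finset (Fin 4)} {x : ℝ} (hS : ∑ i ∈ S, γ i ≤ x) :
    ∑ i ∈ S, p i ≤ Lcurve γ p x := by
  refine le_Lcurve γ p fun c hc => ?_
  have hpos : ∑ i ∈ S, (p i - c * γ i) ≤ ∑ i, max (p i - c * γ i) 0 :=
    (sum_le_sum fun i _ => le_max_left _ _).trans
      (sum_le_sum_of_subset_of_nonneg (subset_univ S) fun i _ _ => le_max_right _ _)
  rw [sum_sub_distrib, ← mul_sum] at hpos
  nlinarith [mul_le_mul_of_nonneg_left hS hc]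

theorem Lcurve_zero (hγ : ∀ i, 0 < γ i) : Lcurve γ p 0 = 0 := by
  set c := ∑ i, |p i| / γ i
  have hc : 0 ≤ c := sum_nonneg fun i _ => div_nonneg (abs_nonneg _) (hγ i).le
  have hterm : ∀ i, max (p i - c * γ i) 0 = 0 := fun i => by
    have : |p i| / γ i ≤ c :=
      single_le_sum (fun j _ => div_nonneg (abs_nonneg _) (hγ j).le) (mem_univ i)
    rw [div_le_iff₀ (hγ i)] at this
    exact max_eq_right (by linarith [le_abs_self (p i)])
  refine le_antisymm ?_ (le_Lcurve γ p fun c hc => ?_)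
  · simpa [hterm] using Lcurve_le_mul_add_sum γ p le_rfl hc
  · simpa using sum_nonneg fun i _ => le_max_right (p i - c * γ i) 0

theorem Lcurve_one (hγ : ∑ i, γ i = 1) (hp : inSimplex p) : Lcurve γ p 1 = 1 := by
  refine le_antisymm ?_ (le_Lcurve γ p fun c _ => ?_)
  · simpa [max_eq_left (hp.1 _), hp.2] using Lcurve_le_mul_add_sum γ p zero_le_one le_rfl
  · have := sum_le_sum fun i (_ : i ∈ univ) => le_max_left (p i - c * γ i) 0
    rw [sum_sub_distrib, ← mul_sum, hγ, hp.2] at this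
    linarith

end Lcurve

theorem Lcurve_comp_perm {γ : Fin 4 → ℝ} (q : Fin 4 → ℝ) (σ : Equiv.Perm (Fin 4))
    (hσ : γ ∘ σ = γ) :
    Lcurve γ (q ∘ σ) = Lcurve γ q := by
  funext x
  refine congrArg iInf (funext fun c => congrArg (c.1 * x + ·) ?_)
  conv_lhs => rw [← hσ]
  exact Equiv.sum_comp σ fun i => max (q i - c.1 * γ i) 0

theorem inSimplex.comp_perm {q : Fin 4 → ℝ} (hq : inSimplex q) (σ : Equiv.Perm (Fin 4)) :
    inSimplex (q ∘ σ) :=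
  ⟨fun i => hq.1 (σ i), (Equiv.sum_comp σ q).trans hq.2⟩

theorem comp_perm_mem_futureCone {γ p q : Fin 4 → ℝ} (hq : q ∈ futureCone γ p)
    (σ : Equiv.Perm (Fin 4)) (hσ : γ ∘ σ = γ) : q ∘ σ ∈ futureCone γ p :=
  ⟨hq.1.comp_perm σ, by simpa only [Lcurve_comp_perm q σ hσ] using hq.2⟩

theorem sum_le_Lcurve_of_mem_futureCone {γ p q : Fin 4 → ℝ} (hq : q ∈ futureCone γ p)
    {S : Finset (Fin 4)} {x : ℝ} (hx : x ∈ Set.Icc 0 1) (hS : ∑ i ∈ S, γ i ≤ x) :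
    ∑ i ∈ S, q i ≤ Lcurve γ p x :=
  (sum_le_Lcurve γ q hS).trans (hq.2 x hx)

theorem extremePt_swap_zero_one (γ p : Fin 4 → ℝ) :
    extremePt γ p (Equiv.swap 0 1) =
      ![Lcurve γ p (γ 0 + γ 1) - Lcurve γ p (γ 1), Lcurve γ p (γ 1) - Lcurve γ p 0,
        Lcurve γ p (γ 0 + γ 1 + γ 2) - Lcurve γ p (γ 0 + γ 1),
        Lcurve γ p (γ 0 + γ 1 + γ 2 + γ 3) - Lcurve γ p (γ 0 + γ 1 + γ 2)] := by
  funext i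
  fin_cases i <;>
    simp +decide [extremePt, partialX, Fin.sum_univ_four, Equiv.swap_apply_def, add_comm]

theorem fwit_neg_of_lt {r : Fin 4 → ℝ} (h0 : 0 ≤ r 0) (h3 : 0 ≤ r 3) (hsum : ∑ i, r i = 1)
    (h : 1 < 2 * r 1 + (√(r 0) - √(r 3)) ^ 2) : fwit r < 0 := by
  rw [Fin.sum_univ_four] at hsum
  have hs := Real.sq_sqrt h0
  have ht := Real.sq_sqrt h3
  have hst := mul_nonneg (Real.sqrt_nonneg (r 0)) (Real.sqrt_nonneg (r 3))
  have hgap : 2 * (√(r 0) * √(r 3)) < r 1 - r 2 := by nlinarith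
  have : fwit r = (2 * (√(r 0) * √(r 3))) ^ 2 - (r 1 - r 2) ^ 2 := by
    rw [fwit]; ring_nf; rw [hs, ht]; ring
  rw [this, sub_neg]
  exact pow_lt_pow_left₀ hgap (by positivity) two_ne_zero

theorem lt_of_fwit_neg {q : Fin 4 → ℝ} (hq : inSimplex q) (h21 : q 2 ≤ q 1) (hf : fwit q < 0) :
    1 < 2 * q 1 + (√(q 0) - √(q 3)) ^ 2 := by
  have hsum := hq.2
  rw [Fin.sum_univ_four] at hsum
  have hs := Real.sq_sqrt (hq.1 0)
  have ht := Real.sq_sqrt (hq.1 3)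
  have hf' : (2 * (√(q 0) * √(q 3))) ^ 2 < (q 1 - q 2) ^ 2 := by
    have : fwit q = (2 * (√(q 0) * √(q 3))) ^ 2 - (q 1 - q 2) ^ 2 := by
      rw [fwit]; ring_nf; rw [hs, ht]; ring
    linarith
  rw [sq_lt_sq₀ (by positivity) (by linarith)] at hf'
  nlinarith

theorem two_mul_add_sq_sqrt_sub_le {a b d x y u : ℝ} (hb : 0 ≤ b) (hd : 0 ≤ d) (hua : u ≤ a)
    (hxu : x + u ≤ a + b) (hdy : d ≤ y) (hyx : y ≤ x) :
    2 * u + (√x - √y) ^ 2 ≤ 2 * a + (√b - √d) ^ 2 := by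
  have hdy' := Real.sqrt_le_sqrt hdy
  have hyx' := Real.sqrt_le_sqrt hyx
  have hd' := Real.sqrt_nonneg d
  have hx_sub : (√x - √y) ^ 2 ≤ (√x - √d) ^ 2 := by gcongr
  rcases le_total √x √b with hxb | hbx
  · have : (√x - √d) ^ 2 ≤ (√b - √d) ^ 2 := by gcongr; linarith
    linarith
  · -- `(√x - √d)² - (√b - √d)² ≤ x - b ≤ a - u`
    have := Real.sq_sqrt (hd.trans (hdy.trans hyx))
    have := Real.sq_sqrt hb
    nlinarith [mul_le_mul_of_nonneg_left hbx hd']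

theorem fwit_neg_of_dominated {q r : Fin 4 → ℝ} (hq : inSimplex q) (hr0 : 0 ≤ r 0)
    (hr3 : 0 ≤ r 3) (hrsum : ∑ i, r i = 1) (h21 : q 2 ≤ q 1) (h1 : q 1 ≤ r 1)
    (h01 : q 0 + q 1 ≤ r 0 + r 1) (h31 : q 3 + q 1 ≤ r 0 + r 1) (h30 : r 3 ≤ q 0)
    (h33 : r 3 ≤ q 3) (hf : fwit q < 0) : fwit r < 0 := by
  refine fwit_neg_of_lt hr0 hr3 hrsum ((lt_of_fwit_neg hq h21 hf).trans_le ?_)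
  rcases le_total (q 3) (q 0) with h | h
  · exact two_mul_add_sq_sqrt_sub_le hr0 hr3 h1 (by linarith) h33 h
  · rw [← neg_sub, neg_sq]
    exact two_mul_add_sq_sqrt_sub_le hr0 hr3 h1 (by linarith) h30 h

theorem fwit_extremePt_swap_zero_one_neg {γ p q : Fin 4 → ℝ} (hγ : ∀ i, 0 < γ i)
    (hγsum : ∑ i, γ i = 1) (hγ12 : γ 1 = γ 2) (hγ30 : γ 3 ≤ γ 0) (hp : inSimplex p)
    (hq : q ∈ futureCone γ p) (hf : fwit q < 0) :
    fwit (extremePt γ p (Equiv.swap 0 1)) < 0 := by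
  wlog h21 : q 2 ≤ q 1 generalizing q
  · have hσ : γ ∘ Equiv.swap 1 2 = γ := by
      funext i; fin_cases i <;> simp [Equiv.swap_apply_of_ne_of_ne, hγ12]
    have hfσ : fwit (q ∘ Equiv.swap 1 2) = fwit q := by
      simp only [fwit, Function.comp_apply, Equiv.swap_apply_left, Equiv.swap_apply_right,
        Equiv.swap_apply_of_ne_of_ne, ne_eq, Fin.reduceEq, not_false_eq_true]
      ring
    refine this (comp_perm_mem_futureCone hq _ hσ) (hfσ ▸ hf) ?_
    simpa using (not_le.mp h21).le
  rw [Fin.sum_univ_four] at hγsum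
  have hγ0 := hγ 0; have hγ1 := hγ 1; have hγ2 := hγ 2; have hγ3 := hγ 3
  have hL1 : Lcurve γ p 1 = 1 := Lcurve_one γ p (by rw [Fin.sum_univ_four, hγsum]) hp
  have hmono {x y : ℝ} (hx : 0 ≤ x) (hxy : x ≤ y) : Lcurve γ p x ≤ Lcurve γ p y :=
    monotoneOn_Lcurve γ p hx (hx.trans hxy) hxy
  have bound (S : Finset (Fin 4)) (x : ℝ) (hS : ∑ i ∈ S, γ i ≤ x) (hx : x ≤ 1) :
      ∑ i ∈ S, q i ≤ Lcurve γ p x :=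
    sum_le_Lcurve_of_mem_futureCone hq ⟨(sum_nonneg fun i _ => (hγ i).le).trans hS, hx⟩ hS
  have h1 : q 1 ≤ Lcurve γ p (γ 1) := by simpa using bound {1} (γ 1) (by simp) (by linarith)
  have h01 : q 0 + q 1 ≤ Lcurve γ p (γ 0 + γ 1) := by
    simpa using bound {0, 1} (γ 0 + γ 1) (by simp) (by linarith)
  have h13 : q 1 + q 3 ≤ Lcurve γ p (γ 0 + γ 1) := by
    simpa using bound {1, 3} (γ 0 + γ 1) (by simp; linarith) (by linarith)
  have h012 : q 0 + (q 1 + q 2) ≤ Lcurve γ p (γ 0 + γ 1 + γ 2) := by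
    simpa using bound {0, 1, 2} (γ 0 + γ 1 + γ 2) (by simp; linarith) (by linarith)
  have h123 : q 1 + (q 2 + q 3) ≤ Lcurve γ p (γ 0 + γ 1 + γ 2) := by
    simpa using bound {1, 2, 3} (γ 0 + γ 1 + γ 2) (by simp; linarith) (by linarith)
  have hqsum := hq.1.2
  rw [Fin.sum_univ_four] at hqsum
  rw [extremePt_swap_zero_one, hγsum, Lcurve_zero γ p hγ, hL1]
  refine fwit_neg_of_dominated hq.1 ?_ ?_ ?_ h21 ?_ ?_ ?_ ?_ ?_ hf <;>
    simp only [Matrix.cons_val, Fin.sum_univ_four]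
  · exact sub_nonneg.2 (hmono (by linarith) (by linarith))
  · exact sub_nonneg.2 (hL1 ▸ hmono (by linarith) (by linarith))
  all_goals linarith

theorem gibbs_pos {Δ : ℝ} (hΔ : 0 < Δ) (i : Fin 4) : 0 < gibbs Δ i := by
  fin_cases i <;> simp [gibbs] <;> positivity

theorem sum_gibbs {Δ : ℝ} (hΔ : 1 + Δ ≠ 0) : ∑ i, gibbs Δ i = 1 := by
  simp only [gibbs, Fin.sum_univ_four, Matrix.cons_val]
  field_simp
  ring

theorem gibbs_three_le_gibbs_zero {Δ : ℝ} (hΔ0 : 0 ≤ Δ) (hΔ1 : Δ ≤ 1) : gibbs Δ 3 ≤ gibbs Δ 0 := by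
  simp only [gibbs, Matrix.cons_val]
  gcongr
  nlinarith

/-- if p is thermally entanglable (some q in its future thermal cone has
f(q) < 0), then the extreme point p* corresponding to the β-ordering (2,1,3,4)
(0-based: the swap of levels 0 and 1) satisfies f(p*) < 0. -/
theorem thermally_entanglable_iff_extreme_point
    (Δ : ℝ) (hΔ0 : 0 < Δ) (hΔ1 : Δ ≤ 1)
    (p : Fin 4 → ℝ) (hp : inSimplex p)
    (h : ∃ q ∈ futureCone (gibbs Δ) p, fwit q < 0) :
    fwit (extremePt (gibbs Δ) p (Equiv.swap 0 1)) < 0 := by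
  obtain ⟨q, hq, hf⟩ := h
  exact fwit_extremePt_swap_zero_one_neg (gibbs_pos hΔ0) (sum_gibbs (by linarith)) rfl
    (gibbs_three_le_gibbs_zero hΔ0.le hΔ1) hp hq hf
end

section
/- Let p ∈ Δ₄. Then f(M·p) ≥ 0 for every doubly stochastic 4×4 real matrix M if and only if f(P·p) ≥ 0 for every 4×4 permutation matrix P. (This characterizes the thermally non-entanglable set at infinite ambient temperature, βE = 0, as the intersection of the 24 sets Ω_π = {p : f(P_π p) ≥ 0}.) -/
/-!
Writing `ζ(q) = (q₀ - q₃) + (q₁ - q₂) i`, one has `f(q) = (q₀ + q₃)² - ‖ζ(q)‖²`, so on the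
half-space `q₀ + q₃ ≥ 0` the condition `f(q) ≥ 0` reads `‖ζ(q)‖ ≤ q₀ + q₃`: a second-order cone,
hence convex. By Birkhoff's theorem every `M p` with `M` doubly stochastic is a convex combination
of the permuted vectors `P_σ p`, which lie in that cone whenever `f(P_σ p) ≥ 0` for all `σ`.
-/

open Finset

/-- A 4×4 real matrix is doubly stochastic. -/
def IsDoublyStochastic (M : Matrix (Fin 4) (Fin 4) ℝ) : Prop :=
  (∀ i j, 0 ≤ M i j) ∧ (∀ i, ∑ j, M i j = 1) ∧ (∀ j, ∑ i, M i j = 1)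

/-- The permutation matrix of σ. -/
def permMatrix (σ : Equiv.Perm (Fin 4)) : Matrix (Fin 4) (Fin 4) ℝ :=
  fun i j => if σ i = j then 1 else 0

open Matrix

theorem convex_setOf_norm_le {E F : Type*} [AddCommGroup E] [Module ℝ E]
    [SeminormedAddCommGroup F] [NormedSpace ℝ F] (L : E →ₗ[ℝ] F) (ℓ : E →ₗ[ℝ] ℝ) :
    Convex ℝ {x | ‖L x‖ ≤ ℓ x} := by
  intro x hx y hy a b ha hb _
  simp only [Set.mem_ofPred_eq, map_add, map_smul, smul_eq_mul] at hx hy ⊢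
  calc ‖a • L x + b • L y‖ ≤ a * ‖L x‖ + b * ‖L y‖ := by
        refine (norm_add_le _ _).trans_eq ?_
        rw [norm_smul, norm_smul, Real.norm_of_nonneg ha, Real.norm_of_nonneg hb]
    _ ≤ a * ℓ x + b * ℓ y := by gcongr

theorem Matrix.mulVec_mem_of_mem_doublyStochastic {R n : Type*} [Field R] [LinearOrder R]
    [IsStrictOrderedRing R] [Fintype n] [DecidableEq n] {S : Set (n → R)} (hS : Convex R S)
    {p : n → R} (hp : ∀ σ : Equiv.Perm n, σ.permMatrix R *ᵥ p ∈ S) {M : Matrix n n R}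
    (hM : M ∈ doublyStochastic R n) : M *ᵥ p ∈ S := by
  have hlin : IsLinearMap R fun N : Matrix n n R => N *ᵥ p :=
    ⟨fun N N' => add_mulVec N N' p, fun c N => smul_mulVec c N p⟩
  rw [← SetLike.mem_coe, doublyStochastic_eq_convexHull_permMatrix] at hM
  exact convexHull_min (by rintro _ ⟨σ, rfl⟩; exact hp σ) (hS.is_linear_preimage hlin) hM

theorem isDoublyStochastic_iff_mem {M : Matrix (Fin 4) (Fin 4) ℝ} :
    IsDoublyStochastic M ↔ M ∈ doublyStochastic ℝ (Fin 4) :=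
  mem_doublyStochastic_iff_sum.symm

theorem permMatrix_eq (σ : Equiv.Perm (Fin 4)) : permMatrix σ = σ.permMatrix ℝ := by
  ext i j
  simp [permMatrix, Equiv.Perm.permMatrix, PEquiv.toMatrix_apply]

theorem permMatrix_mulVec_apply (σ : Equiv.Perm (Fin 4)) (p : Fin 4 → ℝ) (i : Fin 4) :
    (permMatrix σ *ᵥ p) i = p (σ i) := by
  simp [permMatrix, mulVec, dotProduct]

def witnessVec : (Fin 4 → ℝ) →ₗ[ℝ] ℂ where
  toFun q := ⟨q 0 - q 3, q 1 - q 2⟩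
  map_add' q q' := by apply Complex.ext <;> simp <;> ring
  map_smul' c q := by apply Complex.ext <;> simp <;> ring

def witnessCone : Set (Fin 4 → ℝ) :=
  {q | ‖witnessVec q‖ ≤ q 0 + q 3}

theorem convex_witnessCone : Convex ℝ witnessCone := by
  have h := convex_setOf_norm_le witnessVec
    (LinearMap.proj (R := ℝ) (φ := fun _ : Fin 4 ↦ ℝ) 0 + LinearMap.proj 3)
  simp only [LinearMap.add_apply, LinearMap.proj_apply] at h
  exact h

theorem fwit_eq_sq_sub_sq_norm (q : Fin 4 → ℝ) :
    fwit q = (q 0 + q 3) ^ 2 - ‖witnessVec q‖ ^ 2 := by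
  simp only [witnessVec, LinearMap.coe_mk, AddHom.coe_mk, Complex.sq_norm, Complex.normSq_mk, fwit]
  ring

theorem mem_witnessCone_iff {q : Fin 4 → ℝ} :
    q ∈ witnessCone ↔ 0 ≤ q 0 + q 3 ∧ 0 ≤ fwit q := by
  rw [witnessCone, Set.mem_ofPred_eq, fwit_eq_sq_sub_sq_norm, sub_nonneg]
  constructor
  · intro h
    have hsum := (norm_nonneg _).trans h
    exact ⟨hsum, (sq_le_sq₀ (norm_nonneg _) hsum).2 h⟩
  · rintro ⟨hsum, h⟩
    exact (sq_le_sq₀ (norm_nonneg _) hsum).1 h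

/-- p ∈ Δ₄ satisfies f(M p) ≥ 0 for every doubly stochastic M iff
f(P p) ≥ 0 for every permutation matrix P (the βE = 0 thermally non-entanglable set
is the intersection of the 24 sets Ω_π). -/
theorem TNE_infinite_temperature (p : Fin 4 → ℝ) (hp : inSimplex p) :
    (∀ M : Matrix (Fin 4) (Fin 4) ℝ, IsDoublyStochastic M → 0 ≤ fwit (M.mulVec p)) ↔
      (∀ σ : Equiv.Perm (Fin 4), 0 ≤ fwit ((permMatrix σ).mulVec p)) := by
  constructor
  · intro h σ
    exact h _ (isDoublyStochastic_iff_mem.2 (permMatrix_eq σ ▸ permMatrix_mem_doublyStochastic))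
  · intro h M hM
    have hperm : ∀ σ : Equiv.Perm (Fin 4), σ.permMatrix ℝ *ᵥ p ∈ witnessCone := fun σ => by
      rw [← permMatrix_eq, mem_witnessCone_iff, permMatrix_mulVec_apply, permMatrix_mulVec_apply]
      exact ⟨add_nonneg (hp.1 _) (hp.1 _), h σ⟩
    exact (mem_witnessCone_iff.1 <| mulVec_mem_of_mem_doublyStochastic convex_witnessCone hperm
      (isDoublyStochastic_iff_mem.1 hM)).2
end

section
/- Let Δ ∈ (0,1] and let γ = (1, Δ, Δ, Δ²)/(1+Δ)² be the two-qubit Gibbs vector. For every p ∈ Δ₄ such that there exists q ∈ T₊(p) with f(q) < 0, there exists r ∈ T₊(p) with f(r) < 0 whose β-ordering is (2,1,3,4), i.e. r₂/γ₂ ≥ r₁/γ₁ ≥ r₃/γ₃ ≥ r₄/γ₄. -/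
open Finset

/-!
A β-swap of two levels with `γⱼ = t γᵢ`, the Gibbs-preserving stochastic map
`(qᵢ, qⱼ) ↦ ((1 - t) qᵢ + qⱼ, t qᵢ)`, lowers every sum `∑ₖ max (qₖ - c γₖ) 0` by convexity of
`max · 0`, so it maps `T₊(p)` into itself. It therefore suffices to carry an entangled
`q ∈ T₊(p)` by β-swaps into β-ordering (2,1,3,4) while keeping `f < 0`. Swapping the degenerate
levels 2 and 3 leaves `f` unchanged, and the swaps that raise level 2 above level 1 or lower
level 4 below level 1 or 2 only decrease `f`. The swaps of levels 3, 4 and of levels 1, 3 keep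
`f < 0` by explicit polynomial inequalities; for levels 1, 3 these hold only for the whole swap
sequence, whose intermediate states may be separable.
-/

section Thermomajorization

variable {ι : Type*}

def ThermoMajorizes [Fintype ι] (γ q r : ι → ℝ) : Prop :=
  ∀ c : ℝ, 0 ≤ c → ∑ i, max (r i - c * γ i) 0 ≤ ∑ i, max (q i - c * γ i) 0

lemma ThermoMajorizes.trans [Fintype ι] {γ q r s : ι → ℝ} (hqr : ThermoMajorizes γ q r)
    (hrs : ThermoMajorizes γ r s) : ThermoMajorizes γ q s :=
  fun c hc => (hrs c hc).trans (hqr c hc)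

lemma Fintype.sum_eq_sum_add_of_eq_of_ne [Fintype ι] {i j : ι} (hij : i ≠ j) {F G : ι → ℝ}
    (h : ∀ k, k ≠ i → k ≠ j → G k = F k) :
    ∑ k, G k = ∑ k, F k + (G i - F i) + (G j - F j) := by
  have := Fintype.sum_eq_add (f := G - F) i j hij fun k hk => by simp [h k hk.1 hk.2]
  simp only [Pi.sub_apply, Finset.sum_sub_distrib] at this
  linarith

variable [DecidableEq ι]

/-- For Gibbs weights with `γ j = t * γ i` this is a Gibbs-preserving stochastic map, which
exchanges levels `i` and `j` in the β-ordering. -/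
def levelSwap (i j : ι) (t : ℝ) (q : ι → ℝ) : ι → ℝ :=
  Function.update (Function.update q i ((1 - t) * q i + q j)) j (t * q i)

variable {i j : ι} {t : ℝ}

lemma levelSwap_apply_left (hij : i ≠ j) (q : ι → ℝ) :
    levelSwap i j t q i = (1 - t) * q i + q j := by
  simp [levelSwap, Function.update_of_ne hij]

lemma levelSwap_apply_right (q : ι → ℝ) : levelSwap i j t q j = t * q i := by
  simp [levelSwap]

lemma levelSwap_apply_of_ne {k : ι} (hi : k ≠ i) (hj : k ≠ j) (q : ι → ℝ) :
    levelSwap i j t q k = q k := by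
  simp [levelSwap, hi, hj]

lemma sum_levelSwap [Fintype ι] (hij : i ≠ j) (q : ι → ℝ) :
    ∑ k, levelSwap i j t q k = ∑ k, q k := by
  rw [Fintype.sum_eq_sum_add_of_eq_of_ne hij fun k hi hj => levelSwap_apply_of_ne hi hj q,
    levelSwap_apply_left hij, levelSwap_apply_right]
  ring

lemma levelSwap_nonneg (ht0 : 0 ≤ t) (ht1 : t ≤ 1) {q : ι → ℝ} (hq : ∀ k, 0 ≤ q k) (k : ι) :
    0 ≤ levelSwap i j t q k := by
  unfold levelSwap
  rcases eq_or_ne k j with rfl | hj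
  · simpa using mul_nonneg ht0 (hq i)
  rw [Function.update_of_ne hj]
  rcases eq_or_ne k i with rfl | hi
  · simpa using add_nonneg (mul_nonneg (sub_nonneg.2 ht1) (hq k)) (hq j)
  · simpa [hi] using hq k

lemma max_zero_add_max_zero_le (ht0 : 0 ≤ t) (ht1 : t ≤ 1) (u v : ℝ) :
    max ((1 - t) * u + v) 0 + max (t * u) 0 ≤ max u 0 + max v 0 := by
  have hsplit := max_add_add_le_max_add_max (a := (1 - t) * u) (b := v) (c := 0) (d := 0)
  rw [add_zero] at hsplit
  have h1 : max ((1 - t) * u) 0 = (1 - t) * max u 0 := by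
    rw [mul_max_of_nonneg _ _ (sub_nonneg.2 ht1), mul_zero]
  have h2 : max (t * u) 0 = t * max u 0 := by rw [mul_max_of_nonneg _ _ ht0, mul_zero]
  linarith

lemma thermoMajorizes_levelSwap [Fintype ι] {γ : ι → ℝ} (hij : i ≠ j) (ht0 : 0 ≤ t)
    (ht1 : t ≤ 1) (hγ : γ j = t * γ i) (q : ι → ℝ) :
    ThermoMajorizes γ q (levelSwap i j t q) := by
  intro c _
  rw [Fintype.sum_eq_sum_add_of_eq_of_ne hij (F := fun k => max (q k - c * γ k) 0)
    fun k hi hj => by rw [levelSwap_apply_of_ne hi hj], levelSwap_apply_left hij,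
    levelSwap_apply_right]
  have e1 : (1 - t) * q i + q j - c * γ i = (1 - t) * (q i - c * γ i) + (q j - c * γ j) := by
    rw [hγ]; ring
  have e2 : t * q i - c * γ j = t * (q i - c * γ i) := by rw [hγ]; ring
  rw [e1, e2]
  linarith [max_zero_add_max_zero_le ht0 ht1 (q i - c * γ i) (q j - c * γ j)]

end Thermomajorization

lemma inSimplex.levelSwap {q : Fin 4 → ℝ} (hq : inSimplex q) {i j : Fin 4} {t : ℝ}
    (hij : i ≠ j) (ht0 : 0 ≤ t) (ht1 : t ≤ 1) : inSimplex (levelSwap i j t q) :=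
  ⟨levelSwap_nonneg ht0 ht1 hq.1, (sum_levelSwap hij q).trans hq.2⟩

lemma ThermoMajorizes.Lcurve_le {γ q r : Fin 4 → ℝ} (h : ThermoMajorizes γ q r) {x : ℝ}
    (hx : 0 ≤ x) :
    Lcurve γ r x ≤ Lcurve γ q x := by
  refine ciInf_mono ⟨0, ?_⟩ fun c => add_le_add_right (h c.1 c.2) _
  rintro _ ⟨c, rfl⟩
  exact add_nonneg (mul_nonneg c.2 hx) (Finset.sum_nonneg fun i _ => le_max_right _ _)

lemma mem_futureCone_of_thermoMajorizes {γ p q r : Fin 4 → ℝ} (hq : q ∈ futureCone γ p)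
    (hqr : ThermoMajorizes γ q r) (hr : inSimplex r) : r ∈ futureCone γ p :=
  ⟨hr, fun x hx => (hqr.Lcurve_le hx.1).trans (hq.2 x hx)⟩

lemma div_le_div_mul_iff {a b g t : ℝ} (hg : 0 < g) (ht : 0 < t) :
    a / g ≤ b / (t * g) ↔ t * a ≤ b := by
  rw [div_le_div_iff₀ hg (mul_pos ht hg), ← mul_assoc, mul_comm a t]
  exact mul_le_mul_iff_of_pos_right hg

lemma div_mul_le_div_iff {a b g t : ℝ} (hg : 0 < g) (ht : 0 < t) :
    a / (t * g) ≤ b / g ↔ a ≤ t * b := by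
  rw [div_le_div_iff₀ (mul_pos ht hg) hg, ← mul_assoc, mul_comm b t]
  exact mul_le_mul_iff_of_pos_right hg

section Gibbs

variable (Δ : ℝ)

lemma gibbs_one_eq_mul_zero : gibbs Δ 1 = Δ * gibbs Δ 0 := by
  simp only [gibbs, Matrix.cons_val]; ring

lemma gibbs_two_eq_mul_zero : gibbs Δ 2 = Δ * gibbs Δ 0 := by
  simp only [gibbs, Matrix.cons_val]; ring

lemma gibbs_two_eq_mul_one : gibbs Δ 2 = 1 * gibbs Δ 1 := by
  simp [gibbs]

lemma gibbs_three_eq_mul_zero : gibbs Δ 3 = Δ ^ 2 * gibbs Δ 0 := by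
  simp only [gibbs, Matrix.cons_val]; ring

lemma gibbs_three_eq_mul_one : gibbs Δ 3 = Δ * gibbs Δ 1 := by
  simp only [gibbs, Matrix.cons_val]; ring

lemma gibbs_three_eq_mul_two : gibbs Δ 3 = Δ * gibbs Δ 2 := by
  simp only [gibbs, Matrix.cons_val]; ring

end Gibbs

section TwoQubit

variable {Δ : ℝ} {q : Fin 4 → ℝ}

lemma fwit_levelSwap_zero_one_le (hq : ∀ k, 0 ≤ q k) (h10 : q 1 ≤ Δ * q 0)
    (h21 : q 2 ≤ q 1) : fwit (levelSwap 0 1 Δ q) ≤ fwit q := by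
  simp only [fwit, levelSwap, Function.update_apply, Fin.reduceEq, ↓reduceIte]
  nlinarith [mul_nonneg (hq 3) (sub_nonneg.2 h10),
    mul_nonneg (sub_nonneg.2 h10) (by linarith : 0 ≤ q 1 - q 2 + (Δ * q 0 - q 2))]

lemma fwit_levelSwap_one_three_le (hq : ∀ k, 0 ≤ q k) (h31 : Δ * q 1 ≤ q 3)
    (h21 : q 2 ≤ q 1) : fwit (levelSwap 1 3 Δ q) ≤ fwit q := by
  simp only [fwit, levelSwap, Function.update_apply, Fin.reduceEq, ↓reduceIte]
  nlinarith [mul_nonneg (hq 0) (sub_nonneg.2 h31),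
    mul_nonneg (sub_nonneg.2 h31) (by linarith : 0 ≤ q 1 - q 2 + ((1 - Δ) * q 1 + q 3 - q 2))]

lemma fwit_levelSwap_zero_three_le (hΔ1 : Δ ^ 2 ≤ 1) (hq : ∀ k, 0 ≤ q k)
    (h30 : Δ ^ 2 * q 0 ≤ q 3) : fwit (levelSwap 0 3 (Δ ^ 2) q) ≤ fwit q := by
  simp only [fwit, levelSwap, Function.update_apply, Fin.reduceEq, ↓reduceIte]
  nlinarith [mul_nonneg (mul_nonneg (hq 0) (sub_nonneg.2 hΔ1)) (sub_nonneg.2 h30)]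

lemma fwit_levelSwap_one_two (q : Fin 4 → ℝ) : fwit (levelSwap 1 2 1 q) = fwit q := by
  simp only [fwit, levelSwap, Function.update_apply, Fin.reduceEq, ↓reduceIte]
  ring

lemma fwit_levelSwap_two_three_neg (hΔ0 : 0 < Δ) (hq : ∀ k, 0 ≤ q k) (h30 : q 3 ≤ q 0)
    (h23 : Δ * q 2 ≤ q 3) (hf : fwit q < 0) : fwit (levelSwap 2 3 Δ q) < 0 := by
  have hy := hq 2
  simp only [fwit] at hf ⊢
  simp only [levelSwap, Function.update_apply, Fin.reduceEq, ↓reduceIte]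
  generalize q 0 = w at *; generalize q 1 = x at *; generalize q 2 = y at *
  generalize q 3 = z at *
  have hΔy : 0 ≤ Δ * y := mul_nonneg hΔ0.le hy
  have he : 0 ≤ z - Δ * y := sub_nonneg.2 h23
  have hw : 0 ≤ w := hΔy.trans (h23.trans h30)
  -- With `e = z - Δ y`: if `x - y ≤ 2 w` the loss `2 (x - y) e - e²` in `(x - y)²` is at most
  -- `4 w e`; otherwise `(x - y - e)² > (2 w - e)² ≥ 4 w (z - e)`.
  rcases le_or_gt (x - y) (2 * w) with hxy | hxy
  · nlinarith [mul_nonneg he (by linarith : 0 ≤ 2 * w - (x - y))]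
  · nlinarith [mul_pos (by linarith : 0 < x - y - 2 * w)
      (by linarith : 0 < x - y + 2 * w - 2 * (z - Δ * y)), mul_nonneg hw (sub_nonneg.2 h30)]

lemma fwit_levelSwap_zero_two_neg (hΔ0 : 0 < Δ) (hΔ1 : Δ ≤ 1) (hq : ∀ k, 0 ≤ q k)
    (h21 : q 2 ≤ q 1) (h02 : Δ * q 0 ≤ q 2) (h30 : q 3 ≤ Δ ^ 2 * q 0) (hf : fwit q < 0) :
    fwit (levelSwap 0 2 Δ q) < 0 := by
  have hw := hq 0; have hz := hq 3
  simp only [fwit] at hf ⊢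
  simp only [levelSwap, Function.update_apply, Fin.reduceEq, ↓reduceIte]
  generalize q 0 = w at *; generalize q 1 = x at *; generalize q 2 = y at *
  generalize q 3 = z at *
  have hzw : z ≤ w := by nlinarith [mul_nonneg hw (by nlinarith : (0:ℝ) ≤ 1 - Δ ^ 2)]
  have h2z : 2 * z ≤ x - y := by nlinarith [mul_nonneg hz (sub_nonneg.2 hzw)]
  nlinarith [mul_nonneg (sub_nonneg.2 h02) (by linarith : (0:ℝ) ≤ x - y - 2 * z),
    sq_nonneg (y - Δ * w)]

lemma fwit_levelSwap_two_three_zero_two_neg (hΔ0 : 0 < Δ) (hΔ1 : Δ ≤ 1)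
    (hq : ∀ k, 0 ≤ q k) (h21 : q 2 ≤ q 1) (h02 : Δ * q 0 ≤ q 2) (h03 : Δ ^ 2 * q 0 ≤ q 3)
    (h32 : q 3 ≤ Δ * q 2) (hf : fwit q < 0) :
    fwit (levelSwap 2 3 Δ (levelSwap 0 2 Δ q)) < 0 := by
  have hw := hq 0
  simp only [fwit] at hf ⊢
  simp only [levelSwap, Function.update_apply, Fin.reduceEq, ↓reduceIte]
  generalize q 0 = w at *; generalize q 1 = x at *; generalize q 2 = y at *
  generalize q 3 = z at *
  have hgw : 2 * Δ * w ≤ x - y := by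
    nlinarith [mul_nonneg hw (sub_nonneg.2 h03),
      mul_nonneg (mul_nonneg hΔ0.le hw) (sub_nonneg.2 h21)]
  nlinarith [mul_nonneg (sub_nonneg.2 h32) (by linarith : (0:ℝ) ≤ x - y - 2 * Δ * w),
    mul_nonneg (mul_nonneg (by linarith : (0:ℝ) ≤ 1 - Δ)
      (by linarith : (0:ℝ) ≤ x - y - 2 * Δ * w))
      (by nlinarith [mul_nonneg hΔ0.le hw] : (0:ℝ) ≤ x - y + 2 * Δ * w),
    mul_nonneg (mul_nonneg (by linarith : (0:ℝ) ≤ 1 - Δ) (sub_nonneg.2 h21))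
      (sub_nonneg.2 h02),
    sq_nonneg (Δ * y - z), sq_nonneg ((1 - Δ) * (y - Δ * w)),
    mul_nonneg (mul_nonneg (by linarith : (0:ℝ) ≤ 1 - Δ) (sub_nonneg.2 h02))
      (sub_nonneg.2 h32)]

lemma fwit_levelSwap_two_three_zero_two_two_three_neg (hΔ0 : 0 < Δ) (hΔ1 : Δ ≤ 1)
    (hq : ∀ k, 0 ≤ q k) (h21 : q 2 ≤ q 1) (h02 : Δ * q 0 ≤ q 2) (h23 : Δ * q 2 ≤ q 3)
    (hf : fwit q < 0) :
    fwit (levelSwap 2 3 Δ (levelSwap 0 2 Δ (levelSwap 2 3 Δ q))) < 0 := by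
  have hw := hq 0
  simp only [fwit] at hf ⊢
  simp only [levelSwap, Function.update_apply, Fin.reduceEq, ↓reduceIte]
  generalize q 0 = w at *; generalize q 1 = x at *; generalize q 2 = y at *
  generalize q 3 = z at *
  have hgw : 2 * Δ * w ≤ x - y := by
    nlinarith [mul_nonneg hw (by nlinarith : (0:ℝ) ≤ z - Δ ^ 2 * w),
      mul_nonneg (mul_nonneg hΔ0.le hw) (sub_nonneg.2 h21)]
  have e1 : (0:ℝ) ≤ 1 - Δ := by linarith
  have e2 : (0:ℝ) ≤ y - Δ * w := by linarith
  nlinarith [mul_pos (mul_pos hΔ0 hΔ0) (neg_pos.2 hf),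
    mul_nonneg (mul_nonneg (mul_nonneg e1 (by linarith : (0:ℝ) ≤ 1 + Δ))
      (by linarith : (0:ℝ) ≤ x - y - 2 * Δ * w))
      (by nlinarith [mul_nonneg hΔ0.le hw] : (0:ℝ) ≤ x - y + 2 * Δ * w),
    mul_nonneg (mul_nonneg e1 e2)
      (by nlinarith [mul_nonneg (mul_nonneg hΔ0.le hΔ0.le) hw] :
        (0:ℝ) ≤ x - y - 2 * Δ ^ 2 * w),
    sq_nonneg ((1 - Δ) * (y - Δ * w))]

/-- The β-ordering (2,1,3,4) of the paper (levels numbered from 1 there, from 0 here), with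
the Gibbs weights `γ ∝ (1, Δ, Δ, Δ²)` cleared from the ratios `rᵢ / γᵢ`. -/
def BetaOrdered2134 (Δ : ℝ) (r : Fin 4 → ℝ) : Prop :=
  Δ * r 0 ≤ r 1 ∧ r 2 ≤ Δ * r 0 ∧ r 3 ≤ Δ * r 2

def ReachesEntangled2134 (Δ : ℝ) (q : Fin 4 → ℝ) : Prop :=
  ∃ r, ThermoMajorizes (gibbs Δ) q r ∧ inSimplex r ∧ fwit r < 0 ∧ BetaOrdered2134 Δ r

-- In the names below, `a_le_b` compares the rescaled populations `q a / γ a ≤ q b / γ b`.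
namespace ReachesEntangled2134

lemma of_betaOrdered (hq : inSimplex q) (hf : fwit q < 0) (ho : BetaOrdered2134 Δ q) :
    ReachesEntangled2134 Δ q :=
  ⟨q, fun _ _ => le_rfl, hq, hf, ho⟩

lemma of_levelSwap {i j : Fin 4} {t : ℝ} (hij : i ≠ j) (ht0 : 0 ≤ t) (ht1 : t ≤ 1)
    (hγ : gibbs Δ j = t * gibbs Δ i) (h : ReachesEntangled2134 Δ (levelSwap i j t q)) :
    ReachesEntangled2134 Δ q :=
  let ⟨r, hr, hrest⟩ := h
  ⟨r, (thermoMajorizes_levelSwap hij ht0 ht1 hγ q).trans hr, hrest⟩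

lemma of_two_three_le_zero (hΔ0 : 0 < Δ) (hΔ1 : Δ ≤ 1) (hq : inSimplex q) (hf : fwit q < 0)
    (h01 : Δ * q 0 ≤ q 1) (h20 : q 2 ≤ Δ * q 0) (h30 : q 3 ≤ Δ ^ 2 * q 0) :
    ReachesEntangled2134 Δ q := by
  rcases le_or_gt (q 3) (Δ * q 2) with h32 | h23
  · exact of_betaOrdered hq hf ⟨h01, h20, h32⟩
  have h30' : q 3 ≤ q 0 :=
    h30.trans (mul_le_of_le_one_left (hq.1 0) (pow_le_one₀ hΔ0.le hΔ1))
  apply of_levelSwap (by decide) hΔ0.le hΔ1 (gibbs_three_eq_mul_two Δ)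
  refine of_betaOrdered (hq.levelSwap (by decide) hΔ0.le hΔ1)
    (fwit_levelSwap_two_three_neg hΔ0 hq.1 h30' h23.le hf) ?_
  simp only [BetaOrdered2134, levelSwap, Function.update_apply, Fin.reduceEq, ↓reduceIte]
  refine ⟨h01, ?_, ?_⟩
  · nlinarith [mul_le_mul_of_nonneg_left h20 (sub_nonneg.2 hΔ1)]
  · nlinarith [mul_nonneg hΔ0.le (sub_nonneg.2 h23.le)]

lemma of_two_le_zero (hΔ0 : 0 < Δ) (hΔ1 : Δ ≤ 1) (hq : inSimplex q) (hf : fwit q < 0)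
    (h01 : Δ * q 0 ≤ q 1) (h20 : q 2 ≤ Δ * q 0) (h31 : q 3 ≤ Δ * q 1) :
    ReachesEntangled2134 Δ q := by
  rcases le_or_gt (q 3) (Δ ^ 2 * q 0) with h30 | h03
  · exact of_two_three_le_zero hΔ0 hΔ1 hq hf h01 h20 h30
  have hΔ2 : Δ ^ 2 ≤ 1 := pow_le_one₀ hΔ0.le hΔ1
  apply of_levelSwap (by decide) (by positivity) hΔ2 (gibbs_three_eq_mul_zero Δ)
  apply of_two_three_le_zero hΔ0 hΔ1 (hq.levelSwap (by decide) (by positivity) hΔ2)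
    ((fwit_levelSwap_zero_three_le hΔ2 hq.1 h03.le).trans_lt hf) <;>
    simp only [levelSwap, Function.update_apply, Fin.reduceEq, ↓reduceIte]
  · nlinarith [mul_le_mul_of_nonneg_left h01 (sub_nonneg.2 hΔ2),
      mul_le_mul_of_nonneg_left h31 hΔ0.le]
  · nlinarith [mul_nonneg hΔ0.le (sub_nonneg.2 h03.le)]
  · nlinarith [mul_nonneg (sq_nonneg Δ) (sub_nonneg.2 h03.le)]

lemma of_zero_lt_two (hΔ0 : 0 < Δ) (hΔ1 : Δ ≤ 1) (hq : inSimplex q) (hf : fwit q < 0)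
    (h02 : Δ * q 0 < q 2) (h21 : q 2 ≤ q 1) (h31 : q 3 ≤ Δ * q 1) :
    ReachesEntangled2134 Δ q := by
  have hq02 := hq.levelSwap (i := 0) (j := 2) (by decide) hΔ0.le hΔ1
  rcases le_or_gt (q 3) (Δ ^ 2 * q 0) with h30 | h03
  · apply of_levelSwap (by decide) hΔ0.le hΔ1 (gibbs_two_eq_mul_zero Δ)
    apply of_two_three_le_zero hΔ0 hΔ1 hq02
      (fwit_levelSwap_zero_two_neg hΔ0 hΔ1 hq.1 h21 h02.le h30 hf) <;>
    simp only [levelSwap, Function.update_apply, Fin.reduceEq, ↓reduceIte]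
    · nlinarith [mul_le_mul_of_nonneg_left h21 hΔ0.le]
    · nlinarith [mul_nonneg hΔ0.le (sub_nonneg.2 h02.le)]
    · nlinarith [mul_nonneg (sq_nonneg Δ) (sub_nonneg.2 h02.le)]
  rcases le_or_gt (q 3) (Δ * q 2) with h32 | h23
  · apply of_levelSwap (by decide) hΔ0.le hΔ1 (gibbs_two_eq_mul_zero Δ)
    apply of_levelSwap (by decide) hΔ0.le hΔ1 (gibbs_three_eq_mul_two Δ)
    refine of_betaOrdered (hq02.levelSwap (by decide) hΔ0.le hΔ1)
      (fwit_levelSwap_two_three_zero_two_neg hΔ0 hΔ1 hq.1 h21 h02.le h03.le h32 hf) ?_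
    simp only [BetaOrdered2134, levelSwap, Function.update_apply, Fin.reduceEq, ↓reduceIte]
    refine ⟨?_, ?_, ?_⟩
    · nlinarith [mul_le_mul_of_nonneg_left h21 hΔ0.le]
    · nlinarith
    · nlinarith
  · apply of_levelSwap (by decide) hΔ0.le hΔ1 (gibbs_three_eq_mul_two Δ)
    apply of_levelSwap (by decide) hΔ0.le hΔ1 (gibbs_two_eq_mul_zero Δ)
    apply of_levelSwap (by decide) hΔ0.le hΔ1 (gibbs_three_eq_mul_two Δ)
    refine of_betaOrdered (((hq.levelSwap (by decide) hΔ0.le hΔ1).levelSwap (by decide)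
      hΔ0.le hΔ1).levelSwap (by decide) hΔ0.le hΔ1)
      (fwit_levelSwap_two_three_zero_two_two_three_neg hΔ0 hΔ1 hq.1 h21 h02.le h23.le hf) ?_
    simp only [BetaOrdered2134, levelSwap, Function.update_apply, Fin.reduceEq, ↓reduceIte]
    refine ⟨?_, ?_, ?_⟩
    · nlinarith [mul_le_mul_of_nonneg_left h21 hΔ0.le]
    · nlinarith
    · nlinarith

lemma of_three_le_one (hΔ0 : 0 < Δ) (hΔ1 : Δ ≤ 1) (hq : inSimplex q) (hf : fwit q < 0)
    (h01 : Δ * q 0 ≤ q 1) (h21 : q 2 ≤ q 1) (h31 : q 3 ≤ Δ * q 1) :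
    ReachesEntangled2134 Δ q := by
  rcases le_or_gt (q 2) (Δ * q 0) with h20 | h02
  · exact of_two_le_zero hΔ0 hΔ1 hq hf h01 h20 h31
  · exact of_zero_lt_two hΔ0 hΔ1 hq hf h02 h21 h31

lemma of_zero_le_one (hΔ0 : 0 < Δ) (hΔ1 : Δ ≤ 1) (hq : inSimplex q) (hf : fwit q < 0)
    (h01 : Δ * q 0 ≤ q 1) (h21 : q 2 ≤ q 1) : ReachesEntangled2134 Δ q := by
  rcases le_or_gt (q 3) (Δ * q 1) with h31 | h13
  · exact of_three_le_one hΔ0 hΔ1 hq hf h01 h21 h31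
  apply of_levelSwap (by decide) hΔ0.le hΔ1 (gibbs_three_eq_mul_one Δ)
  apply of_three_le_one hΔ0 hΔ1 (hq.levelSwap (by decide) hΔ0.le hΔ1)
    ((fwit_levelSwap_one_three_le hq.1 h13.le h21).trans_lt hf) <;>
    simp only [levelSwap, Function.update_apply, Fin.reduceEq, ↓reduceIte]
  · nlinarith
  · nlinarith
  · nlinarith

lemma of_two_le_one (hΔ0 : 0 < Δ) (hΔ1 : Δ ≤ 1) (hq : inSimplex q) (hf : fwit q < 0)
    (h21 : q 2 ≤ q 1) : ReachesEntangled2134 Δ q := by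
  rcases le_or_gt (Δ * q 0) (q 1) with h01 | h10
  · exact of_zero_le_one hΔ0 hΔ1 hq hf h01 h21
  apply of_levelSwap (by decide) hΔ0.le hΔ1 (gibbs_one_eq_mul_zero Δ)
  apply of_zero_le_one hΔ0 hΔ1 (hq.levelSwap (by decide) hΔ0.le hΔ1)
    ((fwit_levelSwap_zero_one_le hq.1 h10.le h21).trans_lt hf) <;>
    simp only [levelSwap, Function.update_apply, Fin.reduceEq, ↓reduceIte]
  · nlinarith
  · linarith

end ReachesEntangled2134

lemma reachesEntangled2134_of_fwit_neg (hΔ0 : 0 < Δ) (hΔ1 : Δ ≤ 1) (hq : inSimplex q)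
    (hf : fwit q < 0) :
    ReachesEntangled2134 Δ q := by
  rcases le_total (q 2) (q 1) with h21 | h12
  · exact .of_two_le_one hΔ0 hΔ1 hq hf h21
  apply ReachesEntangled2134.of_levelSwap (by decide) zero_le_one le_rfl (gibbs_two_eq_mul_one Δ)
  apply ReachesEntangled2134.of_two_le_one hΔ0 hΔ1 (hq.levelSwap (by decide) zero_le_one le_rfl)
    ((fwit_levelSwap_one_two q).trans_lt hf)
  simpa [levelSwap] using h12

lemma BetaOrdered2134.div_gibbs (hΔ0 : 0 < Δ) {r : Fin 4 → ℝ} (hr : BetaOrdered2134 Δ r) :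
    r 0 / gibbs Δ 0 ≤ r 1 / gibbs Δ 1 ∧ r 2 / gibbs Δ 2 ≤ r 0 / gibbs Δ 0 ∧
      r 3 / gibbs Δ 3 ≤ r 2 / gibbs Δ 2 := by
  obtain ⟨h01, h20, h32⟩ := hr
  have hg0 : 0 < gibbs Δ 0 := by simp only [gibbs, Matrix.cons_val]; positivity
  have hg2 : 0 < gibbs Δ 2 := by rw [gibbs_two_eq_mul_zero]; positivity
  refine ⟨?_, ?_, ?_⟩
  · rwa [gibbs_one_eq_mul_zero, div_le_div_mul_iff hg0 hΔ0]
  · rwa [gibbs_two_eq_mul_zero, div_mul_le_div_iff hg0 hΔ0]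
  · rwa [gibbs_three_eq_mul_two, div_mul_le_div_iff hg2 hΔ0]

end TwoQubit

theorem critical_beta_ordering_general
    (Δ : ℝ) (hΔ0 : 0 < Δ) (hΔ1 : Δ ≤ 1)
    (p : Fin 4 → ℝ)
    (h : ∃ q ∈ futureCone (gibbs Δ) p, fwit q < 0) :
    ∃ r ∈ futureCone (gibbs Δ) p, fwit r < 0 ∧
      r 0 / gibbs Δ 0 ≤ r 1 / gibbs Δ 1 ∧
      r 2 / gibbs Δ 2 ≤ r 0 / gibbs Δ 0 ∧
      r 3 / gibbs Δ 3 ≤ r 2 / gibbs Δ 2 := by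
  obtain ⟨q, hq, hfq⟩ := h
  obtain ⟨r, hqr, hr, hfr, hord⟩ := reachesEntangled2134_of_fwit_neg hΔ0 hΔ1 hq.1 hfq
  exact ⟨r, mem_futureCone_of_thermoMajorizes hq hqr hr, hfr, hord.div_gibbs hΔ0⟩

/-- if some q ∈ T₊(p) has f(q) < 0, then there exists r ∈ T₊(p) with
f(r) < 0 whose β-ordering is (2,1,3,4), i.e. r₂/γ₂ ≥ r₁/γ₁ ≥ r₃/γ₃ ≥ r₄/γ₄. -/
theorem critical_beta_ordering
    (Δ : ℝ) (hΔ0 : 0 < Δ) (hΔ1 : Δ ≤ 1)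
    (p : Fin 4 → ℝ) (hp : inSimplex p)
    (h : ∃ q ∈ futureCone (gibbs Δ) p, fwit q < 0) :
    ∃ r ∈ futureCone (gibbs Δ) p, fwit r < 0 ∧
      r 0 / gibbs Δ 0 ≤ r 1 / gibbs Δ 1 ∧
      r 2 / gibbs Δ 2 ≤ r 0 / gibbs Δ 0 ∧
      r 3 / gibbs Δ 3 ≤ r 2 / gibbs Δ 2 :=
  critical_beta_ordering_general Δ hΔ0 hΔ1 p h
end

section
/- The subspace non-entanglable set NE = {q ∈ Δ₄ : 4q₁q₄ ≥ (q₂ − q₃)²} is a convex subset of ℝ⁴. -/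
open Finset

/-- the subspace non-entanglable set
NE = {q ∈ Δ₄ : 4q₁q₄ ≥ (q₂ − q₃)²} is convex. -/
theorem NE_convex : Convex ℝ { q : Fin 4 → ℝ | inSimplex q ∧ 0 ≤ fwit q } := by
  rintro a ⟨⟨ha0, ha1⟩, hfa⟩ b ⟨⟨hb0, hb1⟩, hfb⟩ u v hu hv huv
  refine ⟨⟨fun i => by
      have := ha0 i; have := hb0 i
      simp only [Pi.add_apply, Pi.smul_apply, smul_eq_mul]
      positivity, ?_⟩, ?_⟩
  · simp only [Pi.add_apply, Pi.smul_apply, smul_eq_mul]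
    rw [Finset.sum_add_distrib, ← Finset.mul_sum, ← Finset.mul_sum, ha1, hb1]
    linarith
  · simp only [fwit, Set.mem_setOf_eq, Pi.add_apply, Pi.smul_apply, smul_eq_mul] at *
    have h0 := ha0 0; have h3 := ha0 3; have g0 := hb0 0; have g3 := hb0 3
    have key : 0 ≤ 2 * (a 0 * b 3 + a 3 * b 0) - (a 1 - a 2) * (b 1 - b 2) := by
      nlinarith [mul_nonneg hfa hfb, sq_nonneg (a 0 * b 3 - a 3 * b 0),
        mul_nonneg h0 g3, mul_nonneg h3 g0, sq_nonneg ((a 1 - a 2) * (b 1 - b 2))]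
    nlinarith [mul_nonneg (sq_nonneg u) hfa, mul_nonneg (sq_nonneg v) hfb,
      mul_nonneg (mul_nonneg hu hv) key]
end

section
/- Let q ∈ Δ₄ and θ, φ ∈ ℝ, and let M = M(q,θ,φ) be the Hermitian 4×4 complex matrix with M₁₁ = q₁, M₂₂ = q₂cos²θ + q₃sin²θ, M₃₃ = q₂sin²θ + q₃cos²θ, M₄₄ = q₄, M₁₄ = ((q₃ − q₂)/2)·sin(2θ)·e^{iφ}, M₄₁ = conj(M₁₄), and all other entries zero. Then λ₋ := ½[(q₁ + q₄) − √((q₂ − q₃)²sin²(2θ) + (q₁ − q₄)²)] is an eigenvalue of M, and M is positive semidefinite if and only if 4q₁q₄ ≥ (q₂ − q₃)²sin²(2θ) (equivalently, iff λ₋ ≥ 0). -/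
open Finset
open scoped ComplexOrder

/-- The partial transpose M(q,θ,φ) of the rotated two-qubit state:
M₁₁ = q₁, M₂₂ = q₂cos²θ + q₃sin²θ, M₃₃ = q₂sin²θ + q₃cos²θ, M₄₄ = q₄,
M₁₄ = ((q₃−q₂)/2)·sin(2θ)·e^{iφ}, M₄₁ = conj(M₁₄), all other entries zero. -/
noncomputable def Mmat (q : Fin 4 → ℝ) (θ φ : ℝ) : Matrix (Fin 4) (Fin 4) ℂ :=
  !![(q 0 : ℂ), 0, 0, (((q 2 - q 1) / 2 * Real.sin (2 * θ) : ℝ) : ℂ) * Complex.exp (Complex.I * φ);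
     0, ((q 1 * Real.cos θ ^ 2 + q 2 * Real.sin θ ^ 2 : ℝ) : ℂ), 0, 0;
     0, 0, ((q 1 * Real.sin θ ^ 2 + q 2 * Real.cos θ ^ 2 : ℝ) : ℂ), 0;
     (((q 2 - q 1) / 2 * Real.sin (2 * θ) : ℝ) : ℂ) * Complex.exp (-(Complex.I * φ)), 0, 0,
       (q 3 : ℂ)]

/-!
`M` couples only `|00⟩` and `|11⟩`: it is the direct sum of the Hermitian block
`[[q₁, z], [z̄, q₄]]` on these two vectors, where `4|z|² = (q₂ − q₃)² sin²(2θ)`, and of nonnegative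
diagonal entries on `span{|01⟩, |10⟩}`. Hence `λ₋`, the smaller root of the characteristic
polynomial `λ² − (q₁ + q₄)λ + q₁q₄ − |z|²` of the block, is an eigenvalue of `M`, and `M` is
positive semidefinite exactly when the block is, i.e. when its determinant `q₁q₄ − |z|²` is
nonnegative.
-/

open Complex Matrix ComplexConjugate

def cornerCoupled (a m₁ m₂ d : ℝ) (z : ℂ) : Matrix (Fin 4) (Fin 4) ℂ :=
  !![(a : ℂ), 0, 0, z; 0, (m₁ : ℂ), 0, 0; 0, 0, (m₂ : ℂ), 0; conj z, 0, 0, (d : ℂ)]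

theorem conj_mul_add_conj_mul_nonneg {a d : ℝ} {z : ℂ} (ha : 0 ≤ a) (hd : 0 ≤ d)
    (hz : normSq z ≤ a * d) (u w : ℂ) :
    0 ≤ conj u * (a * u + z * w) + conj w * (conj z * u + d * w) := by
  rcases ha.eq_or_lt with rfl | ha
  · obtain rfl : z = 0 := normSq_eq_zero.mp (le_antisymm (by simpa using hz) (normSq_nonneg z))
    simpa [mul_left_comm] using mul_nonneg (zero_le_real.mpr hd) (star_mul_self_nonneg w)
  · have hsquare : (a : ℂ) * (conj u * (a * u + z * w) + conj w * (conj z * u + d * w)) =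
        conj (a * u + z * w) * (a * u + z * w) + ((a * d - normSq z : ℝ) : ℂ) * (conj w * w) := by
      simp only [map_add, map_mul, conj_ofReal, ofReal_sub, ofReal_mul, normSq_eq_conj_mul_self]
      ring
    have hnonneg : (0 : ℂ) ≤ (a : ℂ) * (conj u * (a * u + z * w) + conj w * (conj z * u + d * w)) := by
      rw [hsquare]
      exact add_nonneg (star_mul_self_nonneg _)
        (mul_nonneg (zero_le_real.mpr (sub_nonneg.mpr hz)) (star_mul_self_nonneg _))
    exact le_of_mul_le_mul_left (by simpa using hnonneg) (zero_lt_real.mpr ha)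

section CornerCoupled

variable {a m₁ m₂ d : ℝ} {z : ℂ}

theorem cornerCoupled_isHermitian : (cornerCoupled a m₁ m₂ d z).IsHermitian := by
  refine IsHermitian.ext fun i j => ?_
  fin_cases i <;> fin_cases j <;> simp [cornerCoupled]

theorem cornerCoupled_dotProduct_mulVec (x : Fin 4 → ℂ) :
    star x ⬝ᵥ cornerCoupled a m₁ m₂ d z *ᵥ x =
      conj (x 0) * (a * x 0 + z * x 3) + conj (x 3) * (conj z * x 0 + d * x 3) +
        m₁ * (conj (x 1) * x 1) + m₂ * (conj (x 2) * x 2) := by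
  simp only [dotProduct, Pi.star_apply, RCLike.star_def, mulVec, cornerCoupled, of_apply,
    cons_val', cons_val_fin_one, Fin.sum_univ_four, Fin.isValue, cons_val_zero, cons_val_one,
    Matrix.cons_val, zero_mul, add_zero, zero_add]
  ring

theorem cornerCoupled_posSemidef_iff :
    (cornerCoupled a m₁ m₂ d z).PosSemidef ↔
      0 ≤ a ∧ 0 ≤ d ∧ 0 ≤ m₁ ∧ 0 ≤ m₂ ∧ normSq z ≤ a * d := by
  constructor
  · intro h
    have ha := h.diag_nonneg (i := 0)
    have hd := h.diag_nonneg (i := 3)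
    have hm₁ := h.diag_nonneg (i := 1)
    have hm₂ := h.diag_nonneg (i := 2)
    have hdet := (h.submatrix ![0, 3]).det_nonneg
    rw [det_fin_two] at hdet
    simp only [cornerCoupled, Fin.isValue, of_apply, cons_val', cons_val_zero, cons_val_fin_one,
      zero_le_real, Matrix.cons_val, cons_val_one, submatrix_apply, mul_conj,
      sub_nonneg] at ha hd hm₁ hm₂ hdet
    exact ⟨ha, hd, hm₁, hm₂, by exact_mod_cast hdet⟩
  · rintro ⟨ha, hd, hm₁, hm₂, hz⟩
    refine .of_dotProduct_mulVec_nonneg cornerCoupled_isHermitian fun x => ?_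
    rw [cornerCoupled_dotProduct_mulVec]
    exact add_nonneg (add_nonneg (conj_mul_add_conj_mul_nonneg ha hd hz _ _)
      (mul_nonneg (zero_le_real.mpr hm₁) (star_mul_self_nonneg _)))
      (mul_nonneg (zero_le_real.mpr hm₂) (star_mul_self_nonneg _))

theorem exists_cornerCoupled_mulVec_eq_smul {μ : ℝ}
    (hμ : μ ^ 2 - (a + d) * μ + (a * d - normSq z) = 0) :
    ∃ v : Fin 4 → ℂ, v ≠ 0 ∧ cornerCoupled a m₁ m₂ d z *ᵥ v = (μ : ℂ) • v := by
  have hμ' : (μ : ℂ) ^ 2 - (a + d) * μ + (a * d - conj z * z) = 0 := by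
    rw [← normSq_eq_conj_mul_self]; exact_mod_cast hμ
  by_cases hz : z = 0 ∧ μ = a
  · obtain ⟨rfl, rfl⟩ := hz
    refine ⟨Pi.single 0 1, by simp, ?_⟩
    ext i; fin_cases i <;> simp [cornerCoupled, mulVec, dotProduct, Fin.sum_univ_four]
  · refine ⟨![z, 0, 0, μ - a], fun h => hz ⟨congr_fun h 0, ?_⟩, ?_⟩
    · exact_mod_cast sub_eq_zero.mp (congr_fun h 3)
    · ext i
      fin_cases i <;>
        simp only [mulVec, dotProduct, cornerCoupled, Fin.zero_eta, Fin.mk_one, Fin.reduceFinMk,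
          Fin.isValue, of_apply, cons_val', cons_val_fin_one, cons_val_zero, cons_val_one,
          Matrix.cons_val, Fin.sum_univ_four, zero_mul, mul_zero, add_zero, Pi.smul_apply,
          smul_eq_mul]
      · ring
      · linear_combination -hμ'

theorem exists_cornerCoupled_mulVec_eq_lowerRoot_smul :
    ∃ v : Fin 4 → ℂ, v ≠ 0 ∧ cornerCoupled a m₁ m₂ d z *ᵥ v =
      ((((a + d) - √(4 * normSq z + (a - d) ^ 2)) / 2 : ℝ) : ℂ) • v := by
  refine exists_cornerCoupled_mulVec_eq_smul ?_
  have := Real.sq_sqrt (by have := normSq_nonneg z; positivity : 0 ≤ 4 * normSq z + (a - d) ^ 2)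
  linear_combination this / 4

end CornerCoupled

theorem half_sub_sqrt_nonneg_iff {a d s : ℝ} (ha : 0 ≤ a) (hd : 0 ≤ d) :
    0 ≤ ((a + d) - √(s + (a - d) ^ 2)) / 2 ↔ s ≤ 4 * a * d := by
  rw [div_nonneg_iff, sub_nonneg, Real.sqrt_le_left (add_nonneg ha hd)]
  constructor
  · rintro (⟨h, -⟩ | ⟨-, h⟩) <;> linarith
  · intro h; left; constructor <;> linarith

theorem Mmat_eq_cornerCoupled (q : Fin 4 → ℝ) (θ φ : ℝ) :
    Mmat q θ φ = cornerCoupled (q 0) (q 1 * Real.cos θ ^ 2 + q 2 * Real.sin θ ^ 2)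
      (q 1 * Real.sin θ ^ 2 + q 2 * Real.cos θ ^ 2) (q 3)
      (((q 2 - q 1) / 2 * Real.sin (2 * θ) : ℝ) * exp (I * φ)) := by
  simp only [Mmat, cornerCoupled, map_mul, conj_ofReal, ← exp_conj, conj_I, neg_mul]

/-- λ₋ = ½[(q₁+q₄) − √((q₂−q₃)²sin²(2θ) + (q₁−q₄)²)] is an eigenvalue of
M(q,θ,φ), and M(q,θ,φ) is positive semidefinite iff 4q₁q₄ ≥ (q₂−q₃)²sin²(2θ),
equivalently iff λ₋ ≥ 0. -/
theorem Mmat_eigenvalue_and_psd (q : Fin 4 → ℝ) (hq : inSimplex q) (θ φ : ℝ) :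
    (∃ v : Fin 4 → ℂ, v ≠ 0 ∧ (Mmat q θ φ).mulVec v =
        ((((q 0 + q 3) -
            Real.sqrt ((q 1 - q 2) ^ 2 * Real.sin (2 * θ) ^ 2 + (q 0 - q 3) ^ 2)) / 2 : ℝ) : ℂ)
          • v) ∧
    ((Mmat q θ φ).PosSemidef ↔ (q 1 - q 2) ^ 2 * Real.sin (2 * θ) ^ 2 ≤ 4 * q 0 * q 3) ∧
    ((Mmat q θ φ).PosSemidef ↔
      0 ≤ ((q 0 + q 3) -
            Real.sqrt ((q 1 - q 2) ^ 2 * Real.sin (2 * θ) ^ 2 + (q 0 - q 3) ^ 2)) / 2) := by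
  obtain ⟨hq, -⟩ := hq
  have hz : 4 * normSq (((q 2 - q 1) / 2 * Real.sin (2 * θ) : ℝ) * exp (I * φ)) =
      (q 1 - q 2) ^ 2 * Real.sin (2 * θ) ^ 2 := by
    rw [normSq_mul, normSq_ofReal, normSq_eq_norm_sq, norm_exp_I_mul_ofReal]
    ring
  have hpsd : (Mmat q θ φ).PosSemidef ↔
      (q 1 - q 2) ^ 2 * Real.sin (2 * θ) ^ 2 ≤ 4 * q 0 * q 3 := by
    have hm₁ : 0 ≤ q 1 * Real.cos θ ^ 2 + q 2 * Real.sin θ ^ 2 :=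
      add_nonneg (mul_nonneg (hq 1) (sq_nonneg _)) (mul_nonneg (hq 2) (sq_nonneg _))
    have hm₂ : 0 ≤ q 1 * Real.sin θ ^ 2 + q 2 * Real.cos θ ^ 2 :=
      add_nonneg (mul_nonneg (hq 1) (sq_nonneg _)) (mul_nonneg (hq 2) (sq_nonneg _))
    rw [Mmat_eq_cornerCoupled, cornerCoupled_posSemidef_iff, ← hz]
    simp only [hq 0, hq 3, hm₁, hm₂, true_and]
    constructor <;> intro h <;> linarith
  refine ⟨?_, hpsd, hpsd.trans (half_sub_sqrt_nonneg_iff (hq 0) (hq 3)).symm⟩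
  rw [Mmat_eq_cornerCoupled, ← hz]
  exact exists_cornerCoupled_mulVec_eq_lowerRoot_smul
end

section
/- Let q ∈ Δ₄. There exist θ, φ ∈ ℝ such that the matrix M(q,θ,φ) has a negative eigenvalue (i.e. is not positive semidefinite) if and only if 4q₁q₄ < (q₂ − q₃)². (In particular the minimum over θ is attained at sin²(2θ) = 1.) -/
open Finset
open scoped ComplexOrder

/-! M is the direct sum of the nonnegative diagonal entries M₂₂, M₃₃ and the 2×2 block on
{|00⟩, |11⟩}, whose off-diagonal entry has modulus |q₂ − q₃|·|sin 2θ|/2. That block is positive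
semidefinite iff |M₁₄|² ≤ q₁q₄, which holds for every θ iff it holds at sin²2θ = 1, i.e. iff
(q₂ − q₃)² ≤ 4q₁q₄. Conversely, at θ = π/4, φ = 0 the test vectors (t, 0, 0, 1) give the real
quadratic q₁t² + (q₃ − q₂)t + q₄, whose discriminant is (q₂ − q₃)² − 4q₁q₄. -/

section

open Complex
open scoped Matrix ComplexConjugate

lemma Mmat_isHermitian (q : Fin 4 → ℝ) (θ φ : ℝ) : (Mmat q θ φ).IsHermitian := by
  ext i j
  fin_cases i <;> fin_cases j <;>
    simp [Mmat, ← exp_conj, -ofReal_sin, -ofReal_cos, -ofReal_mul, -ofReal_pow]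

lemma star_dotProduct_Mmat_mulVec (q : Fin 4 → ℝ) (θ φ : ℝ) (x : Fin 4 → ℂ) :
    star x ⬝ᵥ Mmat q θ φ *ᵥ x =
      ((q 0 * normSq (x 0) + (q 1 * Real.cos θ ^ 2 + q 2 * Real.sin θ ^ 2) * normSq (x 1)
        + (q 1 * Real.sin θ ^ 2 + q 2 * Real.cos θ ^ 2) * normSq (x 2) + q 3 * normSq (x 3)
        + 2 * (Mmat q θ φ 0 3 * conj (x 0) * x 3).re : ℝ) : ℂ) := by
  have hconj : exp (-(I * φ)) = conj (exp (I * φ)) := by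
    rw [← exp_conj]; simp
  set w := Mmat q θ φ 0 3 * conj (x 0) * x 3
  have h : star x ⬝ᵥ Mmat q θ φ *ᵥ x =
      q 0 * (x 0 * conj (x 0))
      + (q 1 * Real.cos θ ^ 2 + q 2 * Real.sin θ ^ 2 : ℝ) * (x 1 * conj (x 1))
      + (q 1 * Real.sin θ ^ 2 + q 2 * Real.cos θ ^ 2 : ℝ) * (x 2 * conj (x 2))
      + q 3 * (x 3 * conj (x 3)) + (w + conj w) := by
    simp only [dotProduct, Pi.star_apply, RCLike.star_def, Matrix.mulVec, Mmat, Fin.isValue,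
      ofReal_add, hconj, Matrix.of_apply, Matrix.cons_val', Matrix.cons_val_fin_one,
      Fin.sum_univ_four, Matrix.cons_val_zero, Matrix.cons_val_one, Matrix.cons_val, zero_mul,
      add_zero, zero_add, map_mul, conj_ofReal, RingHomCompTriple.comp_apply, RingHom.id_apply, w]
    ring
  rw [h, add_conj, mul_conj, mul_conj, mul_conj, mul_conj]
  push_cast
  ring

lemma neg_le_two_mul_re_of_normSq_le {a d : ℝ} {b : ℂ} (ha : 0 ≤ a) (hd : 0 ≤ d)
    (hb : normSq b ≤ a * d) (u v : ℂ) :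
    -(a * normSq u + d * normSq v) ≤ 2 * (b * conj u * v).re := by
  set r := (b * conj u * v).re
  have hU := normSq_nonneg u
  have hV := normSq_nonneg v
  have hr : r * r ≤ normSq b * normSq u * normSq v := by
    simpa only [map_mul, normSq_conj] using re_sq_le_normSq (b * conj u * v)
  have hrad : (2 * r) ^ 2 ≤ (a * normSq u + d * normSq v) ^ 2 := by
    nlinarith [mul_le_mul_of_nonneg_right hb (mul_nonneg hU hV),
      sq_nonneg (a * normSq u - d * normSq v)]
  exact (abs_le_of_sq_le_sq' hrad (by positivity)).1

lemma Mmat_posSemidef_of_sq_le {q : Fin 4 → ℝ} (hq : ∀ i, 0 ≤ q i)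
    (h : (q 1 - q 2) ^ 2 ≤ 4 * q 0 * q 3) (θ φ : ℝ) : (Mmat q θ φ).PosSemidef := by
  refine .of_dotProduct_mulVec_nonneg (Mmat_isHermitian q θ φ) fun x ↦ ?_
  have hb : normSq (Mmat q θ φ 0 3) ≤ q 0 * q 3 := by
    have hsin := Real.sin_sq_le_one (2 * θ)
    have hexp : normSq (exp (I * φ)) = 1 := by
      rw [normSq_eq_norm_sq, mul_comm, norm_exp_ofReal_mul_I, one_pow]
    simp only [Mmat, Matrix.of_apply, Matrix.cons_val', Matrix.cons_val, Matrix.cons_val_zero,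
      map_mul, normSq_ofReal, hexp]
    nlinarith [mul_le_mul_of_nonneg_left hsin (sq_nonneg (q 2 - q 1))]
  have hdiag (s t : ℝ) : 0 ≤ q 1 * s ^ 2 + q 2 * t ^ 2 := by
    have := hq 1; have := hq 2; positivity
  rw [star_dotProduct_Mmat_mulVec, zero_le_real]
  have := neg_le_two_mul_re_of_normSq_le (hq 0) (hq 3) hb (x 0) (x 3)
  have := mul_nonneg (hdiag (Real.cos θ) (Real.sin θ)) (normSq_nonneg (x 1))
  have := mul_nonneg (hdiag (Real.sin θ) (Real.cos θ)) (normSq_nonneg (x 2))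
  linarith

lemma sq_le_of_Mmat_posSemidef {q : Fin 4 → ℝ} (h : (Mmat q (Real.pi / 4) 0).PosSemidef) :
    (q 1 - q 2) ^ 2 ≤ 4 * q 0 * q 3 := by
  have hquad (t : ℝ) : 0 ≤ q 0 * (t * t) + (q 2 - q 1) * t + q 3 := by
    have := h.dotProduct_mulVec_nonneg ![(t : ℂ), 0, 0, 1]
    rw [star_dotProduct_Mmat_mulVec, zero_le_real] at this
    have hsin : Real.sin (2 * (Real.pi / 4)) = 1 := by
      rw [← Real.sin_pi_div_two]; ring_nf
    simp only [Mmat, Matrix.of_apply, Matrix.cons_val', Matrix.cons_val, Matrix.cons_val_zero,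
      Matrix.cons_val_one, Matrix.cons_val_fin_one, hsin, normSq_ofReal, map_zero, map_one,
      conj_ofReal, ofReal_zero, mul_zero, mul_one, add_zero, exp_zero, mul_re, ofReal_re,
      ofReal_im, sub_zero] at this
    linarith
  have := discrim_le_zero hquad
  rw [discrim] at this
  nlinarith

end

/-- there exist θ, φ such that M(q,θ,φ) has a negative eigenvalue
(i.e. is not positive semidefinite) iff 4q₁q₄ < (q₂ − q₃)². -/
theorem entanglable_iff_witness (q : Fin 4 → ℝ) (hq : inSimplex q) :
    (∃ θ φ : ℝ, ¬ (Mmat q θ φ).PosSemidef) ↔ 4 * q 0 * q 3 < (q 1 - q 2) ^ 2 := by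
  constructor
  · rintro ⟨θ, φ, hM⟩
    by_contra! h
    exact hM (Mmat_posSemidef_of_sq_le hq.1 h θ φ)
  · intro h
    exact ⟨Real.pi / 4, 0, fun hM ↦ (sq_le_of_Mmat_posSemidef hM).not_gt h⟩
end

section
/- Let q ∈ Δ₄ and φ ∈ ℝ, and set θ = π/4. Then the sum of the absolute values of the negative eigenvalues of M(q, π/4, φ) (counted with multiplicity) equals max(0, ½[√((q₁ − q₄)² + (q₂ − q₃)²) − (q₁ + q₄)]). Moreover (q₁ − q₄)² + (q₂ − q₃)² = (q₁ + q₄)² − f(q), so this negativity equals max(0, ½[√((q₁ + q₄)² − f(q)) − (q₁ + q₄)]) and is positive exactly when f(q) < 0. -/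
open Finset
open scoped ComplexOrder

open Polynomial Matrix

/-!
At `θ = π/4` the matrix is the direct sum of the `2 × 2` block on `|00⟩, |11⟩`, with diagonal
`q₁, q₄` and off-diagonal entries of modulus `|q₂ - q₃| / 2`, and of `(q₂ + q₃) / 2` times the
identity on `|01⟩, |10⟩`. Its characteristic polynomial therefore factors with roots
`(q₁ + q₄ ± √((q₁ - q₄)² + (q₂ - q₃)²)) / 2` and `(q₂ + q₃) / 2` twice, and these are the
eigenvalues. For `q ≥ 0` only the smallest root can be negative.
-/

lemma Matrix.IsHermitian.sum_comp_eigenvalues_of_charpoly_eq {𝕜 n ι M : Type*} [RCLike 𝕜]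
    [Fintype n] [DecidableEq n] [Fintype ι] [AddCommMonoid M] {A : Matrix n n 𝕜}
    (hA : A.IsHermitian) {d : ι → ℝ} (h : A.charpoly = ∏ i, (X - C (d i : 𝕜))) (g : ℝ → M) :
    ∑ i, g (hA.eigenvalues i) = ∑ i, g (d i) := by
  have hroots : (univ.val.map hA.eigenvalues).map (RCLike.ofReal : ℝ → 𝕜) =
      (univ.val.map d).map RCLike.ofReal := by
    rw [Multiset.map_map, Multiset.map_map, ← hA.roots_charpoly_eq_eigenvalues, h,
      roots_prod _ _ (by simp [prod_ne_zero_iff, X_sub_C_ne_zero])]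
    simp
  simpa only [Multiset.map_map, Function.comp_def, ← sum_eq_multiset_sum] using
    congrArg (fun s => (s.map g).sum) (Multiset.map_injective RCLike.ofReal_injective hroots)

lemma Matrix.charpoly_fin_four_corners {R : Type*} [CommRing R] (a b c d e f : R) :
    (!![a, 0, 0, b; 0, d, 0, 0; 0, 0, e, 0; c, 0, 0, f] : Matrix (Fin 4) (Fin 4) R).charpoly =
      ((X - C a) * (X - C f) - C (b * c)) * ((X - C d) * (X - C e)) := by
  simp [Matrix.charpoly, charmatrix_apply, det_succ_row_zero, Fin.sum_univ_succ, Fin.succAbove]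
  ring

lemma Polynomial.X_sub_C_mul_X_sub_C_sub_C {R : Type*} [CommRing R] {a f c l₁ l₂ : R}
    (hsum : l₁ + l₂ = a + f) (hprod : l₁ * l₂ = a * f - c) :
    (X - C a) * (X - C f) - C c = (X - C l₁) * (X - C l₂) := by
  have h₁ : C l₁ + C l₂ = C a + C f := by simpa only [map_add] using congrArg C hsum
  have h₂ : C l₁ * C l₂ = C a * C f - C c := by
    simpa only [map_mul, map_sub] using congrArg C hprod
  linear_combination X * h₁ - h₂

lemma Mmat_pi_div_four (q : Fin 4 → ℝ) (φ : ℝ) :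
    Mmat q (Real.pi / 4) φ =
      !![(q 0 : ℂ), 0, 0, (((q 2 - q 1) / 2 : ℝ) : ℂ) * Complex.exp (Complex.I * φ);
         0, (((q 1 + q 2) / 2 : ℝ) : ℂ), 0, 0;
         0, 0, (((q 1 + q 2) / 2 : ℝ) : ℂ), 0;
         (((q 2 - q 1) / 2 : ℝ) : ℂ) * Complex.exp (-(Complex.I * φ)), 0, 0, (q 3 : ℂ)] := by
  have hcos : Real.cos (Real.pi / 4) ^ 2 = 1 / 2 := by
    rw [Real.cos_sq, show 2 * (Real.pi / 4) = Real.pi / 2 by ring, Real.cos_pi_div_two]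
    norm_num
  have hsin : Real.sin (Real.pi / 4) ^ 2 = 1 / 2 := by
    rw [Real.sin_sq, hcos]
    norm_num
  rw [Mmat, show 2 * (Real.pi / 4) = Real.pi / 2 by ring, Real.sin_pi_div_two, hcos, hsin,
    mul_one, show q 1 * (1 / 2) + q 2 * (1 / 2) = (q 1 + q 2) / 2 by ring]

noncomputable def spectrumPiDivFour (q : Fin 4 → ℝ) : Fin 4 → ℝ :=
  ![(q 0 + q 3 - Real.sqrt ((q 0 - q 3) ^ 2 + (q 1 - q 2) ^ 2)) / 2,
    (q 0 + q 3 + Real.sqrt ((q 0 - q 3) ^ 2 + (q 1 - q 2) ^ 2)) / 2,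
    (q 1 + q 2) / 2, (q 1 + q 2) / 2]

lemma charpoly_Mmat_pi_div_four (q : Fin 4 → ℝ) (φ : ℝ) :
    (Mmat q (Real.pi / 4) φ).charpoly = ∏ i, (X - C (spectrumPiDivFour q i : ℂ)) := by
  set s := Real.sqrt ((q 0 - q 3) ^ 2 + (q 1 - q 2) ^ 2) with hs
  have hs_sq : s ^ 2 = (q 0 - q 3) ^ 2 + (q 1 - q 2) ^ 2 := Real.sq_sqrt (by positivity)
  have hphase : Complex.exp (Complex.I * φ) * Complex.exp (-(Complex.I * φ)) = 1 := by
    rw [← Complex.exp_add, add_neg_cancel, Complex.exp_zero]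
  rw [Mmat_pi_div_four, charpoly_fin_four_corners, X_sub_C_mul_X_sub_C_sub_C
    (l₁ := (((q 0 + q 3 - s) / 2 : ℝ) : ℂ)) (l₂ := (((q 0 + q 3 + s) / 2 : ℝ) : ℂ))]
  · simp [Fin.prod_univ_four, spectrumPiDivFour, ← hs, mul_assoc]
  · push_cast; ring
  · have hs_sq' : (s : ℂ) ^ 2 = ((q 0 : ℂ) - q 3) ^ 2 + ((q 1 : ℂ) - q 2) ^ 2 := by
      exact_mod_cast hs_sq
    push_cast
    linear_combination (((q 2 : ℂ) - q 1) / 2) ^ 2 * hphase - hs_sq' / 4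

lemma sum_max_neg_spectrumPiDivFour {q : Fin 4 → ℝ} (hq : ∀ i, 0 ≤ q i) :
    ∑ i, max (-(spectrumPiDivFour q i)) 0 =
      max 0 ((Real.sqrt ((q 0 - q 3) ^ 2 + (q 1 - q 2) ^ 2) - (q 0 + q 3)) / 2) := by
  rw [Fin.sum_univ_four]
  simp only [spectrumPiDivFour, Matrix.cons_val_zero, Matrix.cons_val_one, Matrix.cons_val_two,
    Matrix.cons_val_three, Matrix.head_cons, Matrix.tail_cons]
  set s := Real.sqrt ((q 0 - q 3) ^ 2 + (q 1 - q 2) ^ 2)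
  have hs : 0 ≤ s := Real.sqrt_nonneg _
  have h₁ : max (-((q 0 + q 3 + s) / 2)) 0 = 0 := max_eq_right (by linarith [hq 0, hq 3])
  have h₂ : max (-((q 1 + q 2) / 2)) 0 = 0 := max_eq_right (by linarith [hq 1, hq 2])
  rw [h₁, h₂, add_zero, add_zero, add_zero, max_comm, ← neg_div, neg_sub]

lemma sq_sub_add_sq_sub_eq_sq_add_sub_fwit (q : Fin 4 → ℝ) :
    (q 0 - q 3) ^ 2 + (q 1 - q 2) ^ 2 = (q 0 + q 3) ^ 2 - fwit q := by
  rw [fwit]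
  ring

/-- at θ = π/4 the negativity (the sum of absolute values of the negative
eigenvalues of M(q, π/4, φ), with multiplicity) equals
max(0, ½[√((q₁−q₄)² + (q₂−q₃)²) − (q₁+q₄)]); moreover
(q₁−q₄)² + (q₂−q₃)² = (q₁+q₄)² − f(q), so the negativity also equals
max(0, ½[√((q₁+q₄)² − f(q)) − (q₁+q₄)]), and it is positive exactly when f(q) < 0. -/
theorem negativity_formula (q : Fin 4 → ℝ) (hq : inSimplex q) (φ : ℝ)
    (hM : (Mmat q (Real.pi / 4) φ).IsHermitian) :
    (∑ i, max (-(hM.eigenvalues i)) 0) =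
      max 0 ((Real.sqrt ((q 0 - q 3) ^ 2 + (q 1 - q 2) ^ 2) - (q 0 + q 3)) / 2) ∧
    (q 0 - q 3) ^ 2 + (q 1 - q 2) ^ 2 = (q 0 + q 3) ^ 2 - fwit q ∧
    (∑ i, max (-(hM.eigenvalues i)) 0) =
      max 0 ((Real.sqrt ((q 0 + q 3) ^ 2 - fwit q) - (q 0 + q 3)) / 2) ∧
    (0 < ∑ i, max (-(hM.eigenvalues i)) 0 ↔ fwit q < 0) := by
  obtain ⟨hq_nonneg, -⟩ := hq
  have hneg : ∑ i, max (-(hM.eigenvalues i)) 0 =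
      max 0 ((Real.sqrt ((q 0 - q 3) ^ 2 + (q 1 - q 2) ^ 2) - (q 0 + q 3)) / 2) :=
    (hM.sum_comp_eigenvalues_of_charpoly_eq (charpoly_Mmat_pi_div_four q φ)
      (fun x ↦ max (-x) 0)).trans
      (sum_max_neg_spectrumPiDivFour hq_nonneg)
  have hf := sq_sub_add_sq_sub_eq_sq_add_sub_fwit q
  refine ⟨hneg, hf, by rw [hneg, hf], ?_⟩
  rw [hneg, lt_max_iff, lt_self_iff_false, false_or, div_pos_iff_of_pos_right two_pos, sub_pos,
    Real.lt_sqrt (add_nonneg (hq_nonneg 0) (hq_nonneg 3)), hf, lt_sub_iff_add_lt,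
    add_lt_iff_neg_left]
end

section
/- For every q ∈ Δ₄, ½[√((q₁ − q₄)² + (q₂ − q₃)²) − (q₁ + q₄)] ≤ ½, with equality if and only if q = (0,1,0,0) or q = (0,0,1,0). Hence the maximal negativity achievable over the probability simplex is 1/2, attained exactly at the population vectors corresponding to Bell states. -/
/-!
The Euclidean norm is dominated by the ℓ¹ norm, and `|x - y| ≤ x + y` for `x, y ≥ 0`, so
`√((q₁ - q₄)² + (q₂ - q₃)²) ≤ (q₁ + q₄) + (q₂ + q₃) = 1`; the negativity is therefore at most
`(1 - (q₁ + q₄)) / 2 ≤ 1 / 2`. Equality forces `q₁ = q₄ = 0` and `|q₂ - q₃| = q₂ + q₃`,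
i.e. one of `q₂, q₃` vanishes.
-/

open Finset

lemma sqrt_sq_add_sq_le_abs_add_abs (u v : ℝ) : √(u ^ 2 + v ^ 2) ≤ |u| + |v| :=
  Real.sqrt_le_iff.mpr ⟨by positivity, by
    nlinarith [sq_abs u, sq_abs v, mul_nonneg (abs_nonneg u) (abs_nonneg v)]⟩

lemma abs_sub_le_add_of_nonneg {x y : ℝ} (hx : 0 ≤ x) (hy : 0 ≤ y) : |x - y| ≤ x + y := by
  simpa only [abs_of_nonneg hx, abs_of_nonneg hy] using abs_sub x y

lemma eq_zero_or_eq_zero_of_abs_sub_eq_add {x y : ℝ} (hx : 0 ≤ x) (hy : 0 ≤ y)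
    (h : |x - y| = x + y) : x = 0 ∨ y = 0 := by
  rcases abs_eq (add_nonneg hx hy) |>.mp h with h | h
  · right; linarith
  · left; linarith

namespace inSimplex

variable {q : Fin 4 → ℝ}

lemma sqrt_le_one (hq : inSimplex q) : √((q 0 - q 3) ^ 2 + (q 1 - q 2) ^ 2) ≤ 1 := by
  obtain ⟨hpos, hsum⟩ := hq
  rw [Fin.sum_univ_four] at hsum
  calc √((q 0 - q 3) ^ 2 + (q 1 - q 2) ^ 2) ≤ |q 0 - q 3| + |q 1 - q 2| :=
        sqrt_sq_add_sq_le_abs_add_abs _ _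
    _ ≤ (q 0 + q 3) + (q 1 + q 2) :=
        add_le_add (abs_sub_le_add_of_nonneg (hpos 0) (hpos 3))
          (abs_sub_le_add_of_nonneg (hpos 1) (hpos 2))
    _ = 1 := by linarith

lemma eq_bell_of_sqrt_sub_eq_one (hq : inSimplex q)
    (h : √((q 0 - q 3) ^ 2 + (q 1 - q 2) ^ 2) - (q 0 + q 3) = 1) :
    q = ![0, 1, 0, 0] ∨ q = ![0, 0, 1, 0] := by
  have hs := hq.sqrt_le_one
  obtain ⟨hpos, hsum⟩ := hq
  rw [Fin.sum_univ_four] at hsum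
  have h0 : q 0 = 0 := by linarith [hpos 0, hpos 3]
  have h3 : q 3 = 0 := by linarith [hpos 0, hpos 3]
  have hsub : |q 1 - q 2| = q 1 + q 2 := by
    rw [← Real.sqrt_sq_eq_abs, show q 1 + q 2 = 1 by linarith]
    simpa only [h0, h3, sub_zero, add_zero, zero_pow two_ne_zero, zero_add] using h
  rcases eq_zero_or_eq_zero_of_abs_sub_eq_add (hpos 1) (hpos 2) hsub with h1 | h2
  · right
    funext i; fin_cases i <;> simp <;> linarith
  · left
    funext i; fin_cases i <;> simp <;> linarith

end inSimplex

/-- for every q ∈ Δ₄, the (optimally rotated) negativity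
½[√((q₁−q₄)² + (q₂−q₃)²) − (q₁+q₄)] is at most ½, with equality iff q = (0,1,0,0)
or q = (0,0,1,0): the maximal negativity is 1/2, attained exactly at Bell states. -/
theorem max_negativity_bell (q : Fin 4 → ℝ) (hq : inSimplex q) :
    (Real.sqrt ((q 0 - q 3) ^ 2 + (q 1 - q 2) ^ 2) - (q 0 + q 3)) / 2 ≤ 1 / 2 ∧
    ((Real.sqrt ((q 0 - q 3) ^ 2 + (q 1 - q 2) ^ 2) - (q 0 + q 3)) / 2 = 1 / 2 ↔
      q = ![0, 1, 0, 0] ∨ q = ![0, 0, 1, 0]) := by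
  have hs := hq.sqrt_le_one
  have ha : 0 ≤ q 0 + q 3 := add_nonneg (hq.1 0) (hq.1 3)
  refine ⟨by linarith, fun h ↦ hq.eq_bell_of_sqrt_sub_eq_one (by linarith), ?_⟩
  rintro (rfl | rfl) <;> norm_num [Matrix.cons_val_two, Matrix.cons_val_three]
end

section
/- Let p ∈ Δ₄ with p₂ ≥ p₃, and let δ₁ ∈ [0, p₁], δ₃ ∈ [0, p₃], δ₄ ∈ [0, p₄]. Then the vector r = (p₁ − δ₁, p₂ + δ₁ + δ₃ + δ₄, p₃ − δ₃, p₄ − δ₄) lies in Δ₄ and satisfies f(r) ≤ f(p). -/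
open Finset

/-- if p ∈ Δ₄ with p₂ ≥ p₃ and 0 ≤ δ₁ ≤ p₁, 0 ≤ δ₃ ≤ p₃, 0 ≤ δ₄ ≤ p₄,
then r = (p₁−δ₁, p₂+δ₁+δ₃+δ₄, p₃−δ₃, p₄−δ₄) lies in Δ₄ and f(r) ≤ f(p). -/
theorem shift_to_second_level (p : Fin 4 → ℝ) (hp : inSimplex p) (h23 : p 2 ≤ p 1)
    (δ1 δ3 δ4 : ℝ) (h1 : δ1 ∈ Set.Icc 0 (p 0)) (h3 : δ3 ∈ Set.Icc 0 (p 2))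
    (h4 : δ4 ∈ Set.Icc 0 (p 3)) :
    inSimplex ![p 0 - δ1, p 1 + δ1 + δ3 + δ4, p 2 - δ3, p 3 - δ4] ∧
    fwit ![p 0 - δ1, p 1 + δ1 + δ3 + δ4, p 2 - δ3, p 3 - δ4] ≤ fwit p := by
  obtain ⟨hpos, hsum⟩ := hp
  obtain ⟨h1a, h1b⟩ := h1
  obtain ⟨h3a, h3b⟩ := h3
  obtain ⟨h4a, h4b⟩ := h4
  have hp1 := hpos 1
  refine ⟨⟨?_, ?_⟩, ?_⟩
  · intro i
    fin_cases i <;> simp <;> linarith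
  · simp [Fin.sum_univ_four] at hsum ⊢
    linarith
  · simp [fwit, Fin.sum_univ_four]
    nlinarith [mul_nonneg (sub_nonneg.2 h1b) h4a, mul_nonneg h1a (sub_nonneg.2 h4b),
      mul_nonneg h1a h4a, sq_nonneg (δ1 + 2*δ3 + δ4), mul_nonneg (add_nonneg (add_nonneg h1a (by linarith : (0:ℝ) ≤ 2*δ3)) h4a) (sub_nonneg.2 h23)]
end

section
/- Let p ∈ Δ₄ and Δ' ∈ [0,1]. Set r = ((1 − Δ')p₁ + p₄, p₂, p₃, Δ'·p₁). Then r ∈ Δ₄ and f(r) = f(p) − 4(1 − Δ')p₁(p₄ − Δ'p₁); in particular, if p₄ ≥ Δ'·p₁ then f(r) ≤ f(p). -/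
open Finset

/-- β-swap between |00⟩ and |11⟩ with Δ' = e^{−2βE}: for p ∈ Δ₄ and
Δ' ∈ [0,1], r = ((1−Δ')p₁ + p₄, p₂, p₃, Δ'p₁) lies in Δ₄ and
f(r) = f(p) − 4(1−Δ')p₁(p₄ − Δ'p₁); in particular f(r) ≤ f(p) when p₄ ≥ Δ'p₁. -/
theorem beta_swap_witness (p : Fin 4 → ℝ) (hp : inSimplex p)
    (Δ' : ℝ) (hΔ : Δ' ∈ Set.Icc (0 : ℝ) 1) :
    inSimplex ![(1 - Δ') * p 0 + p 3, p 1, p 2, Δ' * p 0] ∧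
    fwit ![(1 - Δ') * p 0 + p 3, p 1, p 2, Δ' * p 0] =
      fwit p - 4 * (1 - Δ') * p 0 * (p 3 - Δ' * p 0) ∧
    (Δ' * p 0 ≤ p 3 →
      fwit ![(1 - Δ') * p 0 + p 3, p 1, p 2, Δ' * p 0] ≤ fwit p) := by

  obtain ⟨hpos, hsum⟩ := hp
  obtain ⟨h0, h1⟩ := hΔ
  have key : fwit ![(1 - Δ') * p 0 + p 3, p 1, p 2, Δ' * p 0] =
      fwit p - 4 * (1 - Δ') * p 0 * (p 3 - Δ' * p 0) := by
    simp [fwit]; ring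
  refine ⟨⟨?_, ?_⟩, key, ?_⟩
  · intro i
    fin_cases i <;> simp <;>
      nlinarith [hpos 0, hpos 1, hpos 2, hpos 3, mul_nonneg (sub_nonneg.mpr h1) (hpos 0), mul_nonneg h0 (hpos 0)]
  · have := hsum
    simp [Fin.sum_univ_four] at this ⊢
    linarith
  · intro h
    rw [key]
    nlinarith [mul_nonneg (mul_nonneg (sub_nonneg.mpr h1) (hpos 0)) (sub_nonneg.mpr h)]
end

section
/- Let p ∈ Δ₄ with p₂ ≥ p₃, p₄ ≤ p₁, and f(p) = 0 (i.e. 4p₁p₄ = (p₂ − p₃)²). Then for every δ with 0 < δ ≤ p₃, the vector q = (p₁ + δ, p₂, p₃ − δ, p₄) lies in Δ₄ and satisfies f(q) ≤ −δ² < 0. -/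
open Finset

/-- case (i), β-ordering (2,3,1,4): if p ∈ Δ₄ with p₂ ≥ p₃, p₄ ≤ p₁ and
f(p) = 0, then for every 0 < δ ≤ p₃ the vector q = (p₁+δ, p₂, p₃−δ, p₄) lies in Δ₄ and
f(q) ≤ −δ² < 0. -/
theorem case_i_computation (p : Fin 4 → ℝ) (hp : inSimplex p) (h23 : p 2 ≤ p 1)
    (h41 : p 3 ≤ p 0) (hf : fwit p = 0) (δ : ℝ) (hδ0 : 0 < δ) (hδ : δ ≤ p 2) :
    inSimplex ![p 0 + δ, p 1, p 2 - δ, p 3] ∧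
    fwit ![p 0 + δ, p 1, p 2 - δ, p 3] ≤ -δ ^ 2 ∧
    fwit ![p 0 + δ, p 1, p 2 - δ, p 3] < 0 := by
  obtain ⟨hpos, hsum⟩ := hp
  have h0 := hpos 0
  have h3 := hpos 3
  have hf' : 4 * p 0 * p 3 - (p 1 - p 2) ^ 2 = 0 := hf
  have key : 2 * p 3 ≤ p 1 - p 2 := by nlinarith [sq_nonneg (p 1 - p 2 - 2 * p 3)]
  have hle : fwit ![p 0 + δ, p 1, p 2 - δ, p 3] ≤ -δ ^ 2 := by
    simp only [fwit, Matrix.cons_val_zero, Matrix.cons_val_one, Matrix.head_cons,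
      Matrix.cons_val_two, Matrix.tail_cons, Matrix.cons_val_three]
    nlinarith
  refine ⟨⟨?_, ?_⟩, hle, lt_of_le_of_lt hle (by nlinarith)⟩
  · intro i
    fin_cases i <;> simp <;> linarith
  · rw [Fin.sum_univ_four] at hsum ⊢
    simp only [Matrix.cons_val_zero, Matrix.cons_val_one, Matrix.head_cons,
      Matrix.cons_val_two, Matrix.tail_cons, Matrix.cons_val_three]
    linarith
end

section
/- Let p ∈ Δ₄ with p₂ ≥ p₃, p₄ ≤ p₁, and f(p) = 0 (i.e. 4p₁p₄ = (p₂ − p₃)²). Then for every δ with 0 < δ ≤ p₄, the vector q = (p₁, p₂, p₃ + δ, p₄ − δ) lies in Δ₄ and satisfies f(q) = −δ² − 2δ(2p₁ − (p₂ − p₃)) ≤ −δ² < 0. -/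
open Finset

/-- case (ii), β-ordering (2,1,4,3): if p ∈ Δ₄ with p₂ ≥ p₃, p₄ ≤ p₁ and
f(p) = 0, then for every 0 < δ ≤ p₄ the vector q = (p₁, p₂, p₃+δ, p₄−δ) lies in Δ₄ and
f(q) = −δ² − 2δ(2p₁ − (p₂ − p₃)) ≤ −δ² < 0. -/
theorem case_ii_computation (p : Fin 4 → ℝ) (hp : inSimplex p) (h23 : p 2 ≤ p 1)
    (h41 : p 3 ≤ p 0) (hf : fwit p = 0) (δ : ℝ) (hδ0 : 0 < δ) (hδ : δ ≤ p 3) :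
    inSimplex ![p 0, p 1, p 2 + δ, p 3 - δ] ∧
    fwit ![p 0, p 1, p 2 + δ, p 3 - δ] = -δ ^ 2 - 2 * δ * (2 * p 0 - (p 1 - p 2)) ∧
    fwit ![p 0, p 1, p 2 + δ, p 3 - δ] ≤ -δ ^ 2 ∧
    fwit ![p 0, p 1, p 2 + δ, p 3 - δ] < 0 := by
  obtain ⟨hnn, hsum⟩ := hp
  have h0 := hnn 0
  have h1 := hnn 1
  have h2 := hnn 2
  have h3 := hnn 3
  have hfe : 4 * p 0 * p 3 = (p 1 - p 2) ^ 2 := by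
    have := hf; unfold fwit at this; linarith
  -- 2 p 0 ≥ p 1 - p 2
  have key : p 1 - p 2 ≤ 2 * p 0 := by
    nlinarith [sq_nonneg (p 1 - p 2), sq_nonneg (2 * p 0 - (p 1 - p 2))]
  have hval : fwit ![p 0, p 1, p 2 + δ, p 3 - δ]
      = -δ ^ 2 - 2 * δ * (2 * p 0 - (p 1 - p 2)) := by
    simp [fwit, Matrix.cons_val_zero, Matrix.cons_val_one]
    ring_nf
    nlinarith [hfe]
  refine ⟨⟨?_, ?_⟩, hval, ?_, ?_⟩
  · intro i
    fin_cases i <;> simp <;> linarith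
  · simp [Fin.sum_univ_four] at hsum ⊢
    linarith
  · rw [hval]; nlinarith
  · rw [hval]; nlinarith
end

section
/- Let 0 < Δ_S ≤ Δ ≤ 1 (a two-qubit thermal state colder than the environment). Define p* = (1/(1+Δ_S)²)·(1 − Δ + Δ_S, Δ, Δ_S, Δ_S²) ∈ Δ₄. Then f(p*) = [4Δ_S²(1 − (Δ − Δ_S)) − (Δ − Δ_S)²]/(1+Δ_S)⁴, and f(p*) < 0 if and only if Δ > Δ_S·(1 + 2√(1 + Δ_S²) − 2Δ_S). Equivalently, the thermal state at inverse temperature β_S with Boltzmann weight Δ_S = e^{−β_S E} becomes thermally entanglable exactly when the ambient Boltzmann weight Δ = e^{−βE} exceeds the critical value Δ_{C₁} = Δ_S(1 + 2√(1 + Δ_S²) − 2Δ_S). -/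
open Finset

/-- for a two-qubit thermal state colder than the environment
(0 < Δ_S ≤ Δ ≤ 1), the extreme point p* = (1−Δ+Δ_S, Δ, Δ_S, Δ_S²)/(1+Δ_S)² lies in Δ₄,
f(p*) = [4Δ_S²(1 − (Δ − Δ_S)) − (Δ − Δ_S)²]/(1+Δ_S)⁴, and f(p*) < 0 iff
Δ > Δ_{C₁} = Δ_S(1 + 2√(1 + Δ_S²) − 2Δ_S). -/
theorem thermal_state_critical_temperature (ΔS Δ : ℝ)
    (h0 : 0 < ΔS) (h1 : ΔS ≤ Δ) (h2 : Δ ≤ 1) :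
    inSimplex (fun i => ![1 - Δ + ΔS, Δ, ΔS, ΔS ^ 2] i / (1 + ΔS) ^ 2) ∧
    fwit (fun i => ![1 - Δ + ΔS, Δ, ΔS, ΔS ^ 2] i / (1 + ΔS) ^ 2) =
      (4 * ΔS ^ 2 * (1 - (Δ - ΔS)) - (Δ - ΔS) ^ 2) / (1 + ΔS) ^ 4 ∧
    (fwit (fun i => ![1 - Δ + ΔS, Δ, ΔS, ΔS ^ 2] i / (1 + ΔS) ^ 2) < 0 ↔
      ΔS * (1 + 2 * Real.sqrt (1 + ΔS ^ 2) - 2 * ΔS) < Δ) := by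
  have hd : (0:ℝ) < (1 + ΔS) ^ 2 := by positivity
  have hd4 : (0:ℝ) < (1 + ΔS) ^ 4 := by positivity
  have hs0 : (0:ℝ) ≤ Real.sqrt (1 + ΔS ^ 2) := Real.sqrt_nonneg _
  have hs2 : Real.sqrt (1 + ΔS ^ 2) ^ 2 = 1 + ΔS ^ 2 := by
    rw [Real.sq_sqrt]; positivity
  set s := Real.sqrt (1 + ΔS ^ 2) with hs
  have hfe : fwit (fun i => ![1 - Δ + ΔS, Δ, ΔS, ΔS ^ 2] i / (1 + ΔS) ^ 2) =
      (4 * ΔS ^ 2 * (1 - (Δ - ΔS)) - (Δ - ΔS) ^ 2) / (1 + ΔS) ^ 4 := by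
    simp only [fwit, Matrix.cons_val_zero, Matrix.cons_val_one, Matrix.head_cons,
      Matrix.cons_val_two, Matrix.tail_cons, Matrix.cons_val_three]
    field_simp
    ring
  have tp_def : (2*ΔS*s - 2*ΔS^2)^2 + 4*ΔS^2*(2*ΔS*s - 2*ΔS^2) - 4*ΔS^2 = 0 := by
    linear_combination 4*ΔS^2*hs2
  refine ⟨⟨?_, ?_⟩, hfe, ?_⟩
  · intro i
    fin_cases i <;> simp <;>
      first
        | (apply div_nonneg _ hd.le; linarith)
        | positivity
  · rw [Fin.sum_univ_four]
    simp only [Matrix.cons_val_zero, Matrix.cons_val_one, Matrix.head_cons,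
      Matrix.cons_val_two, Matrix.tail_cons, Matrix.cons_val_three]
    field_simp
    ring
  · rw [hfe, div_neg_iff]
    constructor
    · rintro (⟨hn, hp⟩ | ⟨hn, hp⟩)
      · linarith
      · by_contra hle
        push_neg at hle
        have key : 0 ≤ ((2*ΔS*s - 2*ΔS^2) - (Δ - ΔS)) * ((Δ - ΔS) + (2*ΔS*s - 2*ΔS^2) + 4*ΔS^2) := by
          apply mul_nonneg
          · nlinarith
          · nlinarith [mul_nonneg h0.le hs0]
        nlinarith [tp_def]
    · intro hgt
      right
      refine ⟨?_, hd4⟩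
      have key : 0 < ((Δ - ΔS) - (2*ΔS*s - 2*ΔS^2)) * ((Δ - ΔS) + (2*ΔS*s - 2*ΔS^2) + 4*ΔS^2) := by
        apply mul_pos
        · nlinarith
        · nlinarith [mul_nonneg h0.le hs0]
      nlinarith [tp_def]
end

section
/- Consider a qubit–qutrit system with Hilbert space ℂ² ⊗ ℂ³ and non-interacting Hamiltonian H = H₁⊗1 + 1⊗H₂ with H₁ = diag(0,1) and H₂ = diag(0,1,2). Let ρ be the diagonal state with populations p₁,…,p₆ ≥ 0 summing to 1 on the energy eigenbasis ordered by energy as |0,0⟩, |0,1⟩, |1,0⟩, |0,2⟩, |1,1⟩, |1,2⟩. If 4p₁·min(p₄,p₅) < (p₂ − p₃)² or 4p₆·min(p₂,p₃) < (p₄ − p₅)², then there exists a unitary U on ℂ⁶ commuting with H such that the partial transpose over the qubit factor of UρU† has a negative eigenvalue; i.e. the state is entanglable by an energy-preserving unitary. -/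
open Finset

/-- Position of the basis state |i,a⟩ of the qubit–qutrit system in the energy-ordered
basis |0,0⟩, |0,1⟩, |1,0⟩, |0,2⟩, |1,1⟩, |1,2⟩. -/
def idx6 : Fin 2 × Fin 3 → Fin 6 := fun x => ![![(0 : Fin 6), 1, 3], ![2, 4, 5]] x.1 x.2

/-- The diagonal qubit–qutrit state with populations p₁,…,p₆ in the energy-ordered basis. -/
noncomputable def rhoState (p : Fin 6 → ℝ) : Matrix (Fin 2 × Fin 3) (Fin 2 × Fin 3) ℂ :=
  Matrix.diagonal fun x => (p (idx6 x) : ℂ)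

/-- The non-interacting Hamiltonian H = H₁ ⊗ 1 + 1 ⊗ H₂ with H₁ = diag(0,1),
H₂ = diag(0,1,2): H|i,a⟩ = (i+a)|i,a⟩. -/
noncomputable def Ham : Matrix (Fin 2 × Fin 3) (Fin 2 × Fin 3) ℂ :=
  Matrix.diagonal fun x => (((x.1 : ℕ) + (x.2 : ℕ) : ℕ) : ℂ)

/-- Partial transpose over the qubit factor: (X^{T₁})_{(i,a),(j,b)} = X_{(j,a),(i,b)}. -/
def ptranspose (X : Matrix (Fin 2 × Fin 3) (Fin 2 × Fin 3) ℂ) :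
    Matrix (Fin 2 × Fin 3) (Fin 2 × Fin 3) ℂ :=
  fun x y => X (y.1, x.2) (x.1, y.2)

/- ### Auxiliary definitions and lemmas -/

/-- `1/√2` as a complex number. -/
noncomputable def sC : ℂ := ((Real.sqrt 2)⁻¹ : ℝ)

lemma sC_mul_sC : sC * sC = 1 / 2 := by
  rw [sC, ← Complex.ofReal_mul, ← Real.sqrt_inv, Real.mul_self_sqrt (by norm_num)]
  norm_num

lemma star_sC : starRingEnd ℂ sC = sC := Complex.conj_ofReal _

/-- Rotate by 45° in the energy-1 subspace {|0,1⟩, |1,0⟩}; swap the energy-2 pair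
{|0,2⟩, |1,1⟩} iff `b`. -/
noncomputable def rotA (b : Bool) : Matrix (Fin 2 × Fin 3) (Fin 2 × Fin 3) ℂ :=
  Matrix.of fun x y =>
    ![![![![(1:ℂ),0,0],![0,0,0]],
       ![![0,sC,0],![sC,0,0]],
       ![![0,0,if b then 0 else 1],![0,if b then 1 else 0,0]]],
      ![![![0,-sC,0],![sC,0,0]],
       ![![0,0,if b then 1 else 0],![0,if b then 0 else 1,0]],
       ![![0,0,0],![0,0,1]]]] x.1 x.2 y.1 y.2

/-- Rotate by 45° in the energy-2 subspace {|0,2⟩, |1,1⟩}; swap the energy-1 pair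
{|0,1⟩, |1,0⟩} iff `b`. -/
noncomputable def rotB (b : Bool) : Matrix (Fin 2 × Fin 3) (Fin 2 × Fin 3) ℂ :=
  Matrix.of fun x y =>
    ![![![![(1:ℂ),0,0],![0,0,0]],
       ![![0,if b then 0 else 1,0],![if b then 1 else 0,0,0]],
       ![![0,0,sC],![0,sC,0]]],
      ![![![0,if b then 1 else 0,0],![if b then 0 else 1,0,0]],
       ![![0,0,-sC],![0,sC,0]],
       ![![0,0,0],![0,0,1]]]] x.1 x.2 y.1 y.2

/-- A matrix acting as the real symmetric block `[[a,c],[c,d]]` on coordinates `x1 ≠ x2`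
(and vanishing elsewhere on those rows and columns) has a negative eigenvalue whenever
`a*d < c²`, with an explicit eigenvector supported on those two coordinates. -/
lemma exists_neg_eig {n : Type*} [Fintype n] [DecidableEq n]
    (M : Matrix n n ℂ) (x1 x2 : n) (hne : x1 ≠ x2) (a d c : ℝ)
    (hM1 : ∀ y, M x1 y = if y = x1 then (a : ℂ) else if y = x2 then (c : ℂ) else 0)
    (hM2 : ∀ y, M x2 y = if y = x1 then (c : ℂ) else if y = x2 then (d : ℂ) else 0)
    (hMcol : ∀ x, x ≠ x1 → x ≠ x2 → M x x1 = 0 ∧ M x x2 = 0)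
    (ha : 0 ≤ a) (hd : 0 ≤ d) (h : a * d < c ^ 2) :
    ∃ (μ : ℝ) (v : n → ℂ), μ < 0 ∧ v ≠ 0 ∧ M.mulVec v = (μ : ℂ) • v := by
  have hc : c ≠ 0 := by intro h0; rw [h0] at h; nlinarith
  obtain ⟨S, hS⟩ : ∃ S : ℝ, S = (a - d) ^ 2 + 4 * c ^ 2 := ⟨_, rfl⟩
  have hS0 : 0 ≤ S := by rw [hS]; positivity
  have hr : Real.sqrt S * Real.sqrt S = S := Real.mul_self_sqrt hS0
  have hrpos : 0 ≤ Real.sqrt S := Real.sqrt_nonneg S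
  obtain ⟨μ, hμ⟩ : ∃ μ : ℝ, μ = (a + d - Real.sqrt S) / 2 := ⟨_, rfl⟩
  have hlt : a + d < Real.sqrt S := by nlinarith
  have hμneg : μ < 0 := by rw [hμ]; linarith
  have hq : μ * μ - (a + d) * μ + (a * d - c * c) = 0 := by
    rw [hμ]; field_simp; nlinarith [hr]
  have hqC : (μ : ℂ) * μ - ((a : ℂ) + d) * μ + ((a : ℂ) * d - c * c) = 0 := by
    exact_mod_cast congrArg (fun t : ℝ => (t : ℂ)) hq
  obtain ⟨v, hv⟩ : ∃ v : n → ℂ, v = fun x =>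
      if x = x1 then (c : ℂ) else if x = x2 then ((μ : ℂ) - a) else 0 := ⟨_, rfl⟩
  have e1 : v x1 = (c : ℂ) := by simp only [hv, if_pos rfl, if_true]
  have e2 : v x2 = ((μ : ℂ) - a) := by
    simp only [hv, if_neg (Ne.symm hne), if_pos rfl, if_true]
  refine ⟨μ, v, hμneg, ?_, ?_⟩
  · intro h0
    have h1 := congrFun h0 x1
    rw [e1, Pi.zero_apply] at h1
    exact hc (by exact_mod_cast h1)
  · funext x
    have key : M.mulVec v x = M x x1 * (c : ℂ) + M x x2 * ((μ : ℂ) - a) := by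
      rw [Matrix.mulVec, dotProduct]
      rw [← Finset.sum_subset (Finset.subset_univ ({x1, x2} : Finset n))
        (fun y _ hy => ?_), Finset.sum_pair hne, e1, e2]
      simp only [Finset.mem_insert, Finset.mem_singleton, not_or] at hy
      simp only [hv, if_neg hy.1, if_neg hy.2, mul_zero]
    rw [key]
    by_cases h1 : x = x1
    · rw [h1, hM1 x1, hM1 x2]
      simp only [if_pos rfl, if_true, if_neg hne, if_neg (Ne.symm hne)]
      rw [Pi.smul_apply, e1, smul_eq_mul]
      ring
    by_cases h2 : x = x2
    · rw [h2, hM2 x1, hM2 x2]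
      simp only [if_pos rfl, if_true, if_neg hne, if_neg (Ne.symm hne)]
      rw [Pi.smul_apply, e2, smul_eq_mul]
      linear_combination -hqC
    · obtain ⟨hz1, hz2⟩ := hMcol x h1 h2
      rw [hz1, hz2]
      have e3 : v x = 0 := by simp only [hv, if_neg h1, if_neg h2]
      rw [Pi.smul_apply, e3, smul_eq_mul, mul_zero, zero_mul, zero_mul, add_zero]

set_option maxHeartbeats 2000000 in
lemma rotA_unitary (b : Bool) : rotA b ∈ Matrix.unitaryGroup (Fin 2 × Fin 3) ℂ := by
  rw [Matrix.mem_unitaryGroup_iff]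
  cases b <;> ext x y <;> fin_cases x <;> fin_cases y <;>
    simp [Matrix.mul_apply, Matrix.one_apply, rotA, Fintype.sum_prod_type,
      Fin.sum_univ_succ, Matrix.star_apply, star_sC, Prod.ext_iff] <;>
    linear_combination 2 * sC_mul_sC

set_option maxHeartbeats 2000000 in
lemma rotB_unitary (b : Bool) : rotB b ∈ Matrix.unitaryGroup (Fin 2 × Fin 3) ℂ := by
  rw [Matrix.mem_unitaryGroup_iff]
  cases b <;> ext x y <;> fin_cases x <;> fin_cases y <;>
    simp [Matrix.mul_apply, Matrix.one_apply, rotB, Fintype.sum_prod_type,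
      Fin.sum_univ_succ, Matrix.star_apply, star_sC, Prod.ext_iff] <;>
    linear_combination 2 * sC_mul_sC

set_option maxHeartbeats 2000000 in
lemma rotA_comm (b : Bool) : rotA b * Ham = Ham * rotA b := by
  cases b <;> ext x y <;> fin_cases x <;> fin_cases y <;>
    simp [Matrix.mul_apply, Ham, Matrix.diagonal_apply, rotA, Fintype.sum_prod_type,
      Fin.sum_univ_succ, Prod.ext_iff] <;> ring

set_option maxHeartbeats 2000000 in
lemma rotB_comm (b : Bool) : rotB b * Ham = Ham * rotB b := by
  cases b <;> ext x y <;> fin_cases x <;> fin_cases y <;>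
    simp [Matrix.mul_apply, Ham, Matrix.diagonal_apply, rotB, Fintype.sum_prod_type,
      Fin.sum_univ_succ, Prod.ext_iff] <;> ring

set_option maxHeartbeats 4000000 in
/-- if 4p₁·min(p₄,p₅) < (p₂−p₃)² or 4p₆·min(p₂,p₃) < (p₄−p₅)², then some
energy-preserving unitary U (commuting with H) makes the partial transpose of UρU†
acquire a negative eigenvalue, i.e. the qubit–qutrit state is entanglable. -/
theorem qubit_qutrit_entanglable (p : Fin 6 → ℝ)
    (hpos : ∀ i, 0 ≤ p i) (hsum : ∑ i, p i = 1)
    (h : 4 * p 0 * min (p 3) (p 4) < (p 1 - p 2) ^ 2 ∨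
         4 * p 5 * min (p 1) (p 2) < (p 3 - p 4) ^ 2) :
    ∃ U : Matrix (Fin 2 × Fin 3) (Fin 2 × Fin 3) ℂ,
      U ∈ Matrix.unitaryGroup (Fin 2 × Fin 3) ℂ ∧
      U * Ham = Ham * U ∧
      ∃ (μ : ℝ) (v : Fin 2 × Fin 3 → ℂ), μ < 0 ∧ v ≠ 0 ∧
        (ptranspose (U * rhoState p * U.conjTranspose)).mulVec v = (μ : ℂ) • v := by
  rcases h with h | h
  · rcases le_total (p 3) (p 4) with hmin | hmin
    · -- min = p 3: use the swap in the energy-2 pair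
      rw [min_eq_left hmin] at h
      refine ⟨rotA true, rotA_unitary true, rotA_comm true,
        exists_neg_eig _ ((0 : Fin 2), (0 : Fin 3)) ((1 : Fin 2), (1 : Fin 3)) (by decide)
          (p 0) (p 3) ((p 2 - p 1) / 2) ?_ ?_ ?_ (hpos 0) (hpos 3) (by nlinarith)⟩
      · intro y
        fin_cases y <;>
          simp [ptranspose, Matrix.mul_apply, rhoState, Matrix.diagonal_apply, rotA, idx6,
            Fintype.sum_prod_type, Fin.sum_univ_succ, star_sC, Prod.ext_iff] <;>
          linear_combination ((p 2 : ℂ) - (p 1 : ℂ)) * sC_mul_sC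
      · intro y
        fin_cases y <;>
          simp [ptranspose, Matrix.mul_apply, rhoState, Matrix.diagonal_apply, rotA, idx6,
            Fintype.sum_prod_type, Fin.sum_univ_succ, star_sC, Prod.ext_iff] <;>
          linear_combination ((p 2 : ℂ) - (p 1 : ℂ)) * sC_mul_sC
      · intro x hx1 hx2
        fin_cases x <;>
          first
          | exact absurd rfl hx1
          | exact absurd rfl hx2
          | constructor <;>
              simp [ptranspose, Matrix.mul_apply, rhoState, Matrix.diagonal_apply, rotA, idx6,
                Fintype.sum_prod_type, Fin.sum_univ_succ, star_sC, Prod.ext_iff]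
    · -- min = p 4: no swap
      rw [min_eq_right hmin] at h
      refine ⟨rotA false, rotA_unitary false, rotA_comm false,
        exists_neg_eig _ ((0 : Fin 2), (0 : Fin 3)) ((1 : Fin 2), (1 : Fin 3)) (by decide)
          (p 0) (p 4) ((p 2 - p 1) / 2) ?_ ?_ ?_ (hpos 0) (hpos 4) (by nlinarith)⟩
      · intro y
        fin_cases y <;>
          simp [ptranspose, Matrix.mul_apply, rhoState, Matrix.diagonal_apply, rotA, idx6,
            Fintype.sum_prod_type, Fin.sum_univ_succ, star_sC, Prod.ext_iff] <;>
          linear_combination ((p 2 : ℂ) - (p 1 : ℂ)) * sC_mul_sC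
      · intro y
        fin_cases y <;>
          simp [ptranspose, Matrix.mul_apply, rhoState, Matrix.diagonal_apply, rotA, idx6,
            Fintype.sum_prod_type, Fin.sum_univ_succ, star_sC, Prod.ext_iff] <;>
          linear_combination ((p 2 : ℂ) - (p 1 : ℂ)) * sC_mul_sC
      · intro x hx1 hx2
        fin_cases x <;>
          first
          | exact absurd rfl hx1
          | exact absurd rfl hx2
          | constructor <;>
              simp [ptranspose, Matrix.mul_apply, rhoState, Matrix.diagonal_apply, rotA, idx6,
                Fintype.sum_prod_type, Fin.sum_univ_succ, star_sC, Prod.ext_iff]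
  · rcases le_total (p 1) (p 2) with hmin | hmin
    · -- min = p 1: no swap
      rw [min_eq_left hmin] at h
      refine ⟨rotB false, rotB_unitary false, rotB_comm false,
        exists_neg_eig _ ((1 : Fin 2), (2 : Fin 3)) ((0 : Fin 2), (1 : Fin 3)) (by decide)
          (p 5) (p 1) ((p 4 - p 3) / 2) ?_ ?_ ?_ (hpos 5) (hpos 1) (by nlinarith)⟩
      · intro y
        fin_cases y <;>
          simp [ptranspose, Matrix.mul_apply, rhoState, Matrix.diagonal_apply, rotB, idx6,
            Fintype.sum_prod_type, Fin.sum_univ_succ, star_sC, Prod.ext_iff] <;>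
          linear_combination ((p 4 : ℂ) - (p 3 : ℂ)) * sC_mul_sC
      · intro y
        fin_cases y <;>
          simp [ptranspose, Matrix.mul_apply, rhoState, Matrix.diagonal_apply, rotB, idx6,
            Fintype.sum_prod_type, Fin.sum_univ_succ, star_sC, Prod.ext_iff] <;>
          linear_combination ((p 4 : ℂ) - (p 3 : ℂ)) * sC_mul_sC
      · intro x hx1 hx2
        fin_cases x <;>
          first
          | exact absurd rfl hx1
          | exact absurd rfl hx2
          | constructor <;>
              simp [ptranspose, Matrix.mul_apply, rhoState, Matrix.diagonal_apply, rotB, idx6,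
                Fintype.sum_prod_type, Fin.sum_univ_succ, star_sC, Prod.ext_iff]
    · -- min = p 2: use the swap in the energy-1 pair
      rw [min_eq_right hmin] at h
      refine ⟨rotB true, rotB_unitary true, rotB_comm true,
        exists_neg_eig _ ((1 : Fin 2), (2 : Fin 3)) ((0 : Fin 2), (1 : Fin 3)) (by decide)
          (p 5) (p 2) ((p 4 - p 3) / 2) ?_ ?_ ?_ (hpos 5) (hpos 2) (by nlinarith)⟩
      · intro y
        fin_cases y <;>
          simp [ptranspose, Matrix.mul_apply, rhoState, Matrix.diagonal_apply, rotB, idx6,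
            Fintype.sum_prod_type, Fin.sum_univ_succ, star_sC, Prod.ext_iff] <;>
          linear_combination ((p 4 : ℂ) - (p 3 : ℂ)) * sC_mul_sC
      · intro y
        fin_cases y <;>
          simp [ptranspose, Matrix.mul_apply, rhoState, Matrix.diagonal_apply, rotB, idx6,
            Fintype.sum_prod_type, Fin.sum_univ_succ, star_sC, Prod.ext_iff] <;>
          linear_combination ((p 4 : ℂ) - (p 3 : ℂ)) * sC_mul_sC
      · intro x hx1 hx2
        fin_cases x <;>
          first
          | exact absurd rfl hx1
          | exact absurd rfl hx2
          | constructor <;>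
              simp [ptranspose, Matrix.mul_apply, rhoState, Matrix.diagonal_apply, rotB, idx6,
                Fintype.sum_prod_type, Fin.sum_univ_succ, star_sC, Prod.ext_iff]
end
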